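/- arXiv:dg-ga/9503010 — 6 statements merged into one kernel-verified Lean document; each statement's English description precedes it below -/
import Mathlib

section
/- Suppose there exists an infinite subset S ⊆ ℂ∖{0} such that for every λ ∈ S the matrix-valued 1-form Ã^λ satisfies the Maurer–Cartan equation dÃ^λ + Ã^λ∧Ã^λ = 0 on U. Then the 1-forms θ, ω, β, η satisfy all of the equations (a) dθ + ω∧θ = 0, (b) dω + ω∧ω − ε·θ∧θᵀ − β∧βᵀ = 0, (c) dβ + ω∧β + β∧η = 0, (d) dη + η∧η − βᵀ∧β = 0, (G) dω + ω∧ω = c·θ∧θᵀ and (N) dη + η∧η = 0 on U. -/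
/-!
Write `a = (s/2)(λ + λ⁻¹)` and `b = (s/(2t))(λ - λ⁻¹)`. The (mid,0), (mid,mid), (mid,bot) and
(bot,bot) blocks of `dÃ^λ + Ã^λ ∧ Ã^λ` are `a (dθ + ω∧θ)`, `dω + ω∧ω - ε a² θ∧θᵀ - b² β∧βᵀ`,
`b (dβ + ω∧β + β∧η)` and `dη + η∧η - b² βᵀ∧β`. Since `(λ - λ⁻¹)² = (λ + λ⁻¹)² - 4`, both `ε a²`
and `b²` are affine in `u = (λ + λ⁻¹)²`, with coefficients fixed by `s² = εc`, `t² = 1 - εc`.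
An infinite `S` contains a `λ` with `a, b ≠ 0` and two values of `λ` with different `u`;
comparing coefficients of `u` gives `β∧βᵀ = (c - ε) θ∧θᵀ`, `dω + ω∧ω = c θ∧θᵀ`, `βᵀ∧β = 0` and
`dη + η∧η = 0`.
-/

open Matrix

/-- Index type for `(n+1)×(n+1)` matrices partitioned into the blocks
`{0}` (size 1), `mid = {1,…,m}` (size `m`) and `bot = {m+1,…,n}` (size `k = n−m`). -/
abbrev Idx (m k : ℕ) := Fin 1 ⊕ Fin m ⊕ Fin k

/-- Assemble a matrix from nine blocks (block sizes 1, m, k). -/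
def blk3 {R : Type*} {m k : ℕ}
    (A00 : Matrix (Fin 1) (Fin 1) R) (A01 : Matrix (Fin 1) (Fin m) R)
    (A02 : Matrix (Fin 1) (Fin k) R)
    (A10 : Matrix (Fin m) (Fin 1) R) (A11 : Matrix (Fin m) (Fin m) R)
    (A12 : Matrix (Fin m) (Fin k) R)
    (A20 : Matrix (Fin k) (Fin 1) R) (A21 : Matrix (Fin k) (Fin m) R)
    (A22 : Matrix (Fin k) (Fin k) R) :
    Matrix (Idx m k) (Idx m k) R :=
  Matrix.of fun i j =>
    match i, j with
    | Sum.inl a, Sum.inl b => A00 a b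
    | Sum.inl a, Sum.inr (Sum.inl b) => A01 a b
    | Sum.inl a, Sum.inr (Sum.inr b) => A02 a b
    | Sum.inr (Sum.inl a), Sum.inl b => A10 a b
    | Sum.inr (Sum.inl a), Sum.inr (Sum.inl b) => A11 a b
    | Sum.inr (Sum.inl a), Sum.inr (Sum.inr b) => A12 a b
    | Sum.inr (Sum.inr a), Sum.inl b => A20 a b
    | Sum.inr (Sum.inr a), Sum.inr (Sum.inl b) => A21 a b
    | Sum.inr (Sum.inr a), Sum.inr (Sum.inr b) => A22 a b

/-- The involution `P = diag(−1, I_m, −I_k)`. -/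
def Pmat (R : Type*) [Ring R] (m k : ℕ) : Matrix (Idx m k) (Idx m k) R :=
  blk3 (-1) 0 0 0 1 0 0 0 (-1)

/-- The involution `Q = diag(1, I_m, −I_k)`. -/
def Qmat (R : Type*) [Ring R] (m k : ℕ) : Matrix (Idx m k) (Idx m k) R :=
  blk3 1 0 0 0 1 0 0 0 (-1)

/-- Entrywise exterior derivative of a matrix-valued 1-form on (an open subset of) `ℝ^m`:
`dα(x)(X,Y) = D_X(α(·)(Y))(x) − D_Y(α(·)(X))(x)`. -/
noncomputable def exd {m : ℕ} {p q : Type*} {𝕜 : Type*} [RCLike 𝕜]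
    (α : (Fin m → ℝ) → (Fin m → ℝ) → Matrix p q 𝕜) (x X Y : Fin m → ℝ) : Matrix p q 𝕜 :=
  Matrix.of fun i j =>
    fderiv ℝ (fun u => α u Y i j) x X - fderiv ℝ (fun u => α u X i j) x Y

/-- The loop of 1-forms `Ã^λ` in block form (block sizes 1, m, k = n − m):
first row `(0, −ε(s/2)(λ+λ⁻¹)θᵀ, 0)`; second row
`((s/2)(λ+λ⁻¹)θ, ω, (s/(2t))(λ−λ⁻¹)β)`; third row `(0, −(s/(2t))(λ−λ⁻¹)βᵀ, η)`. -/
noncomputable def Atilde {m k : ℕ}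
    (θ : (Fin m → ℝ) → (Fin m → ℝ) → Matrix (Fin m) (Fin 1) ℝ)
    (ω : (Fin m → ℝ) → (Fin m → ℝ) → Matrix (Fin m) (Fin m) ℝ)
    (β : (Fin m → ℝ) → (Fin m → ℝ) → Matrix (Fin m) (Fin k) ℝ)
    (η : (Fin m → ℝ) → (Fin m → ℝ) → Matrix (Fin k) (Fin k) ℝ)
    (ε : ℝ) (s t lam : ℂ) (x X : Fin m → ℝ) : Matrix (Idx m k) (Idx m k) ℂ :=
  blk3 0 ((-(ε : ℂ) * (s / 2) * (lam + lam⁻¹)) • ((θ x X).map Complex.ofReal)ᵀ) 0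
    ((s / 2 * (lam + lam⁻¹)) • (θ x X).map Complex.ofReal)
    ((ω x X).map Complex.ofReal)
    ((s / (2 * t) * (lam - lam⁻¹)) • (β x X).map Complex.ofReal)
    0 ((-(s / (2 * t)) * (lam - lam⁻¹)) • ((β x X).map Complex.ofReal)ᵀ)
    ((η x X).map Complex.ofReal)

section Blocks

variable {R : Type*} {m k : ℕ}
  {A00 B00 : Matrix (Fin 1) (Fin 1) R} {A01 B01 : Matrix (Fin 1) (Fin m) R}
  {A02 B02 : Matrix (Fin 1) (Fin k) R} {A10 B10 : Matrix (Fin m) (Fin 1) R}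
  {A11 B11 : Matrix (Fin m) (Fin m) R} {A12 B12 : Matrix (Fin m) (Fin k) R}
  {A20 B20 : Matrix (Fin k) (Fin 1) R} {A21 B21 : Matrix (Fin k) (Fin m) R}
  {A22 B22 : Matrix (Fin k) (Fin k) R}

lemma blk3_add [Add R] :
    blk3 A00 A01 A02 A10 A11 A12 A20 A21 A22 + blk3 B00 B01 B02 B10 B11 B12 B20 B21 B22 =
      blk3 (A00 + B00) (A01 + B01) (A02 + B02) (A10 + B10) (A11 + B11) (A12 + B12)
        (A20 + B20) (A21 + B21) (A22 + B22) := by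
  ext (i | i | i) (j | j | j) <;> rfl

lemma blk3_sub [Sub R] :
    blk3 A00 A01 A02 A10 A11 A12 A20 A21 A22 - blk3 B00 B01 B02 B10 B11 B12 B20 B21 B22 =
      blk3 (A00 - B00) (A01 - B01) (A02 - B02) (A10 - B10) (A11 - B11) (A12 - B12)
        (A20 - B20) (A21 - B21) (A22 - B22) := by
  ext (i | i | i) (j | j | j) <;> rfl

lemma blk3_eq_zero_iff [Zero R] :
    blk3 A00 A01 A02 A10 A11 A12 A20 A21 A22 = 0 ↔
      A00 = 0 ∧ A01 = 0 ∧ A02 = 0 ∧ A10 = 0 ∧ A11 = 0 ∧ A12 = 0 ∧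
        A20 = 0 ∧ A21 = 0 ∧ A22 = 0 := by
  refine ⟨fun h => ?_, fun h => ?_⟩
  · refine ⟨?_, ?_, ?_, ?_, ?_, ?_, ?_, ?_, ?_⟩ <;> ext i j
    exacts [congrFun₂ h (.inl i) (.inl j), congrFun₂ h (.inl i) (.inr (.inl j)),
      congrFun₂ h (.inl i) (.inr (.inr j)), congrFun₂ h (.inr (.inl i)) (.inl j),
      congrFun₂ h (.inr (.inl i)) (.inr (.inl j)), congrFun₂ h (.inr (.inl i)) (.inr (.inr j)),
      congrFun₂ h (.inr (.inr i)) (.inl j), congrFun₂ h (.inr (.inr i)) (.inr (.inl j)),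
      congrFun₂ h (.inr (.inr i)) (.inr (.inr j))]
  · obtain ⟨rfl, rfl, rfl, rfl, rfl, rfl, rfl, rfl, rfl⟩ := h
    ext (i | i | i) (j | j | j) <;> rfl

lemma blk3_mul [NonUnitalNonAssocSemiring R] :
    blk3 A00 A01 A02 A10 A11 A12 A20 A21 A22 * blk3 B00 B01 B02 B10 B11 B12 B20 B21 B22 =
      blk3 (A00 * B00 + A01 * B10 + A02 * B20) (A00 * B01 + A01 * B11 + A02 * B21)
        (A00 * B02 + A01 * B12 + A02 * B22)
        (A10 * B00 + A11 * B10 + A12 * B20) (A10 * B01 + A11 * B11 + A12 * B21)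
        (A10 * B02 + A11 * B12 + A12 * B22)
        (A20 * B00 + A21 * B10 + A22 * B20) (A20 * B01 + A21 * B11 + A22 * B21)
        (A20 * B02 + A21 * B12 + A22 * B22) := by
  ext (i | i | i) (j | j | j) <;>
    simp [blk3, Matrix.mul_apply, Fintype.sum_sum_type, add_assoc]

end Blocks

section ExteriorDerivative

variable {m : ℕ} {p q : Type*}

-- No differentiability is needed: where `g` is not differentiable, neither is `ofReal ∘ g`
-- (compose with `re`), and both derivatives take the junk value `0`.
lemma fderiv_ofReal_comp {E : Type*} [NormedAddCommGroup E] [NormedSpace ℝ E]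
    (g : E → ℝ) (x : E) :
    fderiv ℝ (fun u => (g u : ℂ)) x = Complex.ofRealCLM.comp (fderiv ℝ g x) := by
  by_cases hg : DifferentiableAt ℝ g x
  · exact (Complex.ofRealCLM.hasFDerivAt.comp x hg.hasFDerivAt).fderiv
  · have hg' : ¬DifferentiableAt ℝ (fun u => (g u : ℂ)) x := fun h =>
      hg (Complex.reCLM.differentiableAt.comp x h)
    rw [fderiv_zero_of_not_differentiableAt hg, fderiv_zero_of_not_differentiableAt hg',
      ContinuousLinearMap.comp_zero]

lemma fderiv_const_mul_ofReal_comp {E : Type*} [NormedAddCommGroup E] [NormedSpace ℝ E]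
    (a : ℂ) (g : E → ℝ) (x v : E) :
    fderiv ℝ (fun u => a * (g u : ℂ)) x v = a * (fderiv ℝ g x v : ℂ) := by
  change fderiv ℝ (a • fun u => (g u : ℂ)) x v = _
  rw [fderiv_const_smul_field, Pi.smul_apply, fderiv_ofReal_comp]
  rfl

lemma exd_smul_map_ofReal (a : ℂ) (α : (Fin m → ℝ) → (Fin m → ℝ) → Matrix p q ℝ)
    (x X Y : Fin m → ℝ) :
    exd (fun u Z => a • (α u Z).map Complex.ofReal) x X Y =
      a • (exd α x X Y).map Complex.ofReal := by
  ext i j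
  simp [exd, fderiv_const_mul_ofReal_comp, mul_sub]

lemma exd_map_ofReal (α : (Fin m → ℝ) → (Fin m → ℝ) → Matrix p q ℝ) (x X Y : Fin m → ℝ) :
    exd (fun u Z => (α u Z).map Complex.ofReal) x X Y = (exd α x X Y).map Complex.ofReal := by
  ext i j
  simp [exd, fderiv_ofReal_comp]

lemma exd_smul_transpose_map_ofReal (a : ℂ) (α : (Fin m → ℝ) → (Fin m → ℝ) → Matrix p q ℝ)
    (x X Y : Fin m → ℝ) :
    exd (fun u Z => a • ((α u Z).map Complex.ofReal)ᵀ) x X Y =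
      a • ((exd α x X Y).map Complex.ofReal)ᵀ := by
  ext i j
  simp [exd, fderiv_const_mul_ofReal_comp, mul_sub]

lemma exd_zero {𝕜 : Type*} [RCLike 𝕜] (x X Y : Fin m → ℝ) :
    exd (fun _ _ => (0 : Matrix p q 𝕜)) x X Y = 0 := by
  ext i j; simp [exd]

lemma exd_blk3 {𝕜 : Type*} [RCLike 𝕜] {k : ℕ}
    (A00 : (Fin m → ℝ) → (Fin m → ℝ) → Matrix (Fin 1) (Fin 1) 𝕜)
    (A01 : (Fin m → ℝ) → (Fin m → ℝ) → Matrix (Fin 1) (Fin m) 𝕜)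
    (A02 : (Fin m → ℝ) → (Fin m → ℝ) → Matrix (Fin 1) (Fin k) 𝕜)
    (A10 : (Fin m → ℝ) → (Fin m → ℝ) → Matrix (Fin m) (Fin 1) 𝕜)
    (A11 : (Fin m → ℝ) → (Fin m → ℝ) → Matrix (Fin m) (Fin m) 𝕜)
    (A12 : (Fin m → ℝ) → (Fin m → ℝ) → Matrix (Fin m) (Fin k) 𝕜)
    (A20 : (Fin m → ℝ) → (Fin m → ℝ) → Matrix (Fin k) (Fin 1) 𝕜)
    (A21 : (Fin m → ℝ) → (Fin m → ℝ) → Matrix (Fin k) (Fin m) 𝕜)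
    (A22 : (Fin m → ℝ) → (Fin m → ℝ) → Matrix (Fin k) (Fin k) 𝕜) (x X Y : Fin m → ℝ) :
    exd (fun u Z => blk3 (A00 u Z) (A01 u Z) (A02 u Z) (A10 u Z) (A11 u Z) (A12 u Z)
        (A20 u Z) (A21 u Z) (A22 u Z)) x X Y =
      blk3 (exd A00 x X Y) (exd A01 x X Y) (exd A02 x X Y) (exd A10 x X Y) (exd A11 x X Y)
        (exd A12 x X Y) (exd A20 x X Y) (exd A21 x X Y) (exd A22 x X Y) := by
  ext (i | i | i) (j | j | j) <;> rfl

end ExteriorDerivative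

section MapOfReal

variable {p q r : Type*}

lemma Matrix.map_ofReal_mul [Fintype q] (A : Matrix p q ℝ) (B : Matrix q r ℝ) :
    (A * B).map Complex.ofReal = A.map Complex.ofReal * B.map Complex.ofReal :=
  Matrix.map_mul (f := Complex.ofRealHom)

lemma Matrix.map_ofReal_add (A B : Matrix p q ℝ) :
    (A + B).map Complex.ofReal = A.map Complex.ofReal + B.map Complex.ofReal :=
  Matrix.map_add _ Complex.ofReal_add A B

lemma Matrix.map_ofReal_sub (A B : Matrix p q ℝ) :
    (A - B).map Complex.ofReal = A.map Complex.ofReal - B.map Complex.ofReal :=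
  Matrix.map_sub _ Complex.ofReal_sub A B

lemma Matrix.map_ofReal_eq_zero_iff {A : Matrix p q ℝ} : A.map Complex.ofReal = 0 ↔ A = 0 :=
  (Matrix.map_injective Complex.ofReal_injective).eq_iff' (Matrix.map_zero _ Complex.ofReal_zero)

lemma Matrix.eq_smul_of_map_ofReal_eq_smul {A B : Matrix p q ℝ} {c : ℝ}
    (h : A.map Complex.ofReal = (c : ℂ) • B.map Complex.ofReal) : A = c • B := by
  ext i j
  have h' : (A i j : ℂ) = c * B i j := by simpa using congrFun₂ h i j
  exact_mod_cast h'

end MapOfReal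

theorem maurerCartan_Atilde_blocks {m k : ℕ}
    (θ : (Fin m → ℝ) → (Fin m → ℝ) → Matrix (Fin m) (Fin 1) ℝ)
    (ω : (Fin m → ℝ) → (Fin m → ℝ) → Matrix (Fin m) (Fin m) ℝ)
    (β : (Fin m → ℝ) → (Fin m → ℝ) → Matrix (Fin m) (Fin k) ℝ)
    (η : (Fin m → ℝ) → (Fin m → ℝ) → Matrix (Fin k) (Fin k) ℝ)
    (ε : ℝ) (s t lam : ℂ) (x X Y : Fin m → ℝ)
    (h : exd (fun u Z => Atilde θ ω β η ε s t lam u Z) x X Y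
        + (Atilde θ ω β η ε s t lam x X * Atilde θ ω β η ε s t lam x Y
            - Atilde θ ω β η ε s t lam x Y * Atilde θ ω β η ε s t lam x X) = 0) :
    (s / 2 * (lam + lam⁻¹)) •
        (exd θ x X Y + (ω x X * θ x Y - ω x Y * θ x X)).map Complex.ofReal = 0 ∧
      (exd ω x X Y + (ω x X * ω x Y - ω x Y * ω x X)).map Complex.ofReal
        - ((ε : ℂ) * (s / 2 * (lam + lam⁻¹)) ^ 2) •
            (θ x X * (θ x Y)ᵀ - θ x Y * (θ x X)ᵀ).map Complex.ofReal
        - (s / (2 * t) * (lam - lam⁻¹)) ^ 2 •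
            (β x X * (β x Y)ᵀ - β x Y * (β x X)ᵀ).map Complex.ofReal = 0 ∧
      (s / (2 * t) * (lam - lam⁻¹)) •
        (exd β x X Y + (ω x X * β x Y - ω x Y * β x X)
          + (β x X * η x Y - β x Y * η x X)).map Complex.ofReal = 0 ∧
      (exd η x X Y + (η x X * η x Y - η x Y * η x X)).map Complex.ofReal
        - (s / (2 * t) * (lam - lam⁻¹)) ^ 2 •
            ((β x X)ᵀ * β x Y - (β x Y)ᵀ * β x X).map Complex.ofReal = 0 := by
  simp only [Atilde, exd_blk3, exd_zero, exd_map_ofReal, exd_smul_map_ofReal,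
    exd_smul_transpose_map_ofReal] at h
  rw [blk3_mul, blk3_mul, blk3_sub, blk3_add, blk3_eq_zero_iff] at h
  obtain ⟨-, -, -, h10, h11, h12, -, -, h22⟩ := h
  simp only [Matrix.mul_zero, add_zero, zero_add, Matrix.mul_smul, Matrix.smul_mul,
    ← Matrix.transpose_map, ← Matrix.map_ofReal_mul] at h10 h11 h12 h22
  simp only [Matrix.map_ofReal_add, Matrix.map_ofReal_sub]
  refine ⟨?_, ?_, ?_, ?_⟩
  · linear_combination (norm := module) h10
  · linear_combination (norm := module) h11
  · linear_combination (norm := module) h12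
  · linear_combination (norm := module) h22

lemma sq_sub_inv_eq_sq_add_inv_sub_four {K : Type*} [Field K] {l : K} (hl : l ≠ 0) :
    (l - l⁻¹) ^ 2 = (l + l⁻¹) ^ 2 - 4 := by
  linear_combination (-4 : K) * mul_inv_cancel₀ hl

lemma eq_zero_of_add_smul_eq_zero_of_ne {K M : Type*} [Field K] [AddCommGroup M] [Module K M]
    {u₁ u₂ : K} (hu : u₁ ≠ u₂) {P Q : M} (h₁ : P + u₁ • Q = 0) (h₂ : P + u₂ • Q = 0) :
    P = 0 ∧ Q = 0 := by
  have hQ : Q = 0 := by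
    have : (u₁ - u₂) • Q = 0 := by linear_combination (norm := module) h₁ - h₂
    exact (smul_eq_zero.mp this).resolve_left (sub_ne_zero.mpr hu)
  exact ⟨by simpa [hQ] using h₁, hQ⟩

section SpectralPair

variable {K M : Type*} [Field K] [CharZero K] [AddCommGroup M] [Module K M] {ε c s t : K}

lemma loop_coeff_identities (hε : ε ^ 2 = 1) (hs : s ^ 2 = ε * c) (ht0 : t ≠ 0) {l : K}
    (hl : l ≠ 0) :
    4 * t ^ 2 * (ε * (s / 2 * (l + l⁻¹)) ^ 2) = c * t ^ 2 * (l + l⁻¹) ^ 2 ∧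
      4 * t ^ 2 * (s / (2 * t) * (l - l⁻¹)) ^ 2 = ε * c * ((l + l⁻¹) ^ 2 - 4) := by
  have cancel_t : ∀ v : K, 4 * t ^ 2 * (s / (2 * t) * v) ^ 2 = s ^ 2 * v ^ 2 := fun v => by
    field_simp
    ring
  constructor
  · linear_combination (t ^ 2 * (l + l⁻¹) ^ 2) * (ε * hs + c * hε)
  · rw [cancel_t, hs, sq_sub_inv_eq_sq_add_inv_sub_four hl]

lemma eq_smul_of_spectral_pair (hε : ε ^ 2 = 1) (hs : s ^ 2 = ε * c) (ht : t ^ 2 = 1 - ε * c)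
    (hc : c ≠ 0) (ht0 : t ≠ 0) {l₁ l₂ : K} (hl₁ : l₁ ≠ 0) (hl₂ : l₂ ≠ 0)
    (hl : (l₁ + l₁⁻¹) ^ 2 ≠ (l₂ + l₂⁻¹) ^ 2) {D T B : M}
    (h₁ : D - (ε * (s / 2 * (l₁ + l₁⁻¹)) ^ 2) • T - (s / (2 * t) * (l₁ - l₁⁻¹)) ^ 2 • B = 0)
    (h₂ : D - (ε * (s / 2 * (l₂ + l₂⁻¹)) ^ 2) • T - (s / (2 * t) * (l₂ - l₂⁻¹)) ^ 2 • B = 0) :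
    D = c • T ∧ B = (c - ε) • T := by
  have affine : ∀ l : K, l ≠ 0 →
      D - (ε * (s / 2 * (l + l⁻¹)) ^ 2) • T - (s / (2 * t) * (l - l⁻¹)) ^ 2 • B = 0 →
      ((4 * t ^ 2) • D + (4 * ε * c) • B) + (l + l⁻¹) ^ 2 • (-(c * t ^ 2) • T - (ε * c) • B)
        = 0 := by
    intro l hl h
    obtain ⟨eT, eB⟩ := loop_coeff_identities hε hs ht0 hl
    linear_combination (norm := module) (4 * t ^ 2) • h + eT • T + eB • B
  obtain ⟨hP, hQ⟩ := eq_zero_of_add_smul_eq_zero_of_ne hl (affine l₁ hl₁ h₁) (affine l₂ hl₂ h₂)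
  have hB : B = (c - ε) • T := by
    have h : c • (t ^ 2 • T + ε • B) = 0 := by linear_combination (norm := module) -hQ
    have h' := (smul_eq_zero.mp h).resolve_left hc
    linear_combination (norm := module) ε • h' - hε • B - (ε * ht - c * hε) • T
  have hD : (4 * t ^ 2) • (D - c • T) = 0 := by
    linear_combination (norm := module) hP - (4 * ε * c) • hB + (4 * c * hε - 4 * c * ht) • T
  have h4t : (4 * t ^ 2 : K) ≠ 0 := mul_ne_zero (by norm_num) (pow_ne_zero 2 ht0)
  exact ⟨sub_eq_zero.mp ((smul_eq_zero.mp hD).resolve_left h4t), hB⟩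

end SpectralPair

lemma exists_spectral_pair {K : Type*} [Field K] {S : Set K} (hS : S.Infinite) :
    ∃ l₁ ∈ S, ∃ l₂ ∈ S, l₁ ≠ 0 ∧ l₂ ≠ 0 ∧ l₁ + l₁⁻¹ ≠ 0 ∧ l₁ - l₁⁻¹ ≠ 0 ∧
      (l₁ + l₁⁻¹) ^ 2 ≠ (l₂ + l₂⁻¹) ^ 2 := by
  classical
  obtain ⟨l₁, hl₁S, hl₁⟩ :=
    (hS.sdiff (insert 0 (Polynomial.nthRoots 4 (1 : K)).toFinset).finite_toSet).nonempty
  simp only [Finset.coe_insert, Set.mem_insert_iff, Finset.mem_coe, Multiset.mem_toFinset,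
    Polynomial.mem_nthRoots (by norm_num : 0 < 4), not_or] at hl₁
  obtain ⟨hl₁0, hl₁4⟩ := hl₁
  have hprod : (l₁ + l₁⁻¹) * (l₁ - l₁⁻¹) ≠ 0 := by
    intro h
    apply hl₁4
    field_simp at h
    linear_combination h
  obtain ⟨l₂, hl₂S, hl₂⟩ := (hS.sdiff ({0, l₁, -l₁, l₁⁻¹, -l₁⁻¹} : Finset K).finite_toSet).nonempty
  simp only [Finset.coe_insert, Finset.coe_singleton, Set.mem_insert_iff,
    Set.mem_singleton_iff, not_or] at hl₂
  obtain ⟨hl₂0, h1, h2, h3, h4⟩ := hl₂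
  refine ⟨l₁, hl₁S, l₂, hl₂S, hl₁0, hl₂0, left_ne_zero_of_mul hprod,
    right_ne_zero_of_mul hprod, fun h => ?_⟩
  have : (l₂ - l₁) * (l₂ + l₁) * (l₂ * l₁ - 1) * (l₂ * l₁ + 1) = 0 := by
    field_simp at h
    linear_combination -h
  simp only [mul_eq_zero] at this
  rcases this with ((h | h) | h) | h
  · exact h1 (sub_eq_zero.mp h)
  · exact h2 (eq_neg_of_add_eq_zero_left h)
  · exact h3 (eq_inv_of_mul_eq_one_left (sub_eq_zero.mp h))
  · exact h4 (by field_simp; linear_combination h)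

theorem structure_equations_of_spectral_pair {m k : ℕ}
    {θ : (Fin m → ℝ) → (Fin m → ℝ) → Matrix (Fin m) (Fin 1) ℝ}
    {ω : (Fin m → ℝ) → (Fin m → ℝ) → Matrix (Fin m) (Fin m) ℝ}
    {β : (Fin m → ℝ) → (Fin m → ℝ) → Matrix (Fin m) (Fin k) ℝ}
    {η : (Fin m → ℝ) → (Fin m → ℝ) → Matrix (Fin k) (Fin k) ℝ}
    {ε c : ℝ} (hε : ε = 1 ∨ ε = -1) (hc : c ≠ 0) (hεc : ε * c ≠ 1)
    {s t : ℂ} (hs : s ^ 2 = (ε : ℂ) * (c : ℂ)) (ht : t ^ 2 = 1 - (ε : ℂ) * (c : ℂ))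
    {l₁ l₂ : ℂ} (hl₁ : l₁ ≠ 0) (hl₂ : l₂ ≠ 0) (hl₁p : l₁ + l₁⁻¹ ≠ 0) (hl₁m : l₁ - l₁⁻¹ ≠ 0)
    (hl : (l₁ + l₁⁻¹) ^ 2 ≠ (l₂ + l₂⁻¹) ^ 2) {x X Y : Fin m → ℝ}
    (h₁ : exd (fun u Z => Atilde θ ω β η ε s t l₁ u Z) x X Y
        + (Atilde θ ω β η ε s t l₁ x X * Atilde θ ω β η ε s t l₁ x Y
            - Atilde θ ω β η ε s t l₁ x Y * Atilde θ ω β η ε s t l₁ x X) = 0)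
    (h₂ : exd (fun u Z => Atilde θ ω β η ε s t l₂ u Z) x X Y
        + (Atilde θ ω β η ε s t l₂ x X * Atilde θ ω β η ε s t l₂ x Y
            - Atilde θ ω β η ε s t l₂ x Y * Atilde θ ω β η ε s t l₂ x X) = 0) :
    exd θ x X Y + (ω x X * θ x Y - ω x Y * θ x X) = 0 ∧
    exd ω x X Y + (ω x X * ω x Y - ω x Y * ω x X)
        - ε • (θ x X * (θ x Y)ᵀ - θ x Y * (θ x X)ᵀ)
        - (β x X * (β x Y)ᵀ - β x Y * (β x X)ᵀ) = 0 ∧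
    exd β x X Y + (ω x X * β x Y - ω x Y * β x X)
        + (β x X * η x Y - β x Y * η x X) = 0 ∧
    exd η x X Y + (η x X * η x Y - η x Y * η x X)
        - ((β x X)ᵀ * β x Y - (β x Y)ᵀ * β x X) = 0 ∧
    exd ω x X Y + (ω x X * ω x Y - ω x Y * ω x X)
        = c • (θ x X * (θ x Y)ᵀ - θ x Y * (θ x X)ᵀ) ∧
    exd η x X Y + (η x X * η x Y - η x Y * η x X) = 0 := by
  have hε2 : (ε : ℂ) ^ 2 = 1 := by rcases hε with rfl | rfl <;> norm_num
  have hc' : (c : ℂ) ≠ 0 := Complex.ofReal_ne_zero.mpr hc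
  have hs0 : s ≠ 0 := by
    have hεc0 : (ε : ℂ) * c ≠ 0 := by rcases hε with rfl | rfl <;> simpa using hc
    exact fun h => hεc0 (by rw [← hs, h]; norm_num)
  have ht0 : t ≠ 0 := by
    intro h
    have : (ε : ℂ) * c = 1 := by linear_combination ht - t * h
    exact hεc (by exact_mod_cast this)
  obtain ⟨hθ, hω₁, hβ, hη₁⟩ := maurerCartan_Atilde_blocks θ ω β η ε s t l₁ x X Y h₁
  obtain ⟨-, hω₂, -, hη₂⟩ := maurerCartan_Atilde_blocks θ ω β η ε s t l₂ x X Y h₂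
  obtain ⟨hG, hB⟩ := eq_smul_of_spectral_pair hε2 hs ht hc' ht0 hl₁ hl₂ hl hω₁ hω₂
  obtain ⟨hN, hBη⟩ := eq_smul_of_spectral_pair (T := (0 : Matrix (Fin k) (Fin k) ℂ))
    hε2 hs ht hc' ht0 hl₁ hl₂ hl (by simpa using hη₁) (by simpa using hη₂)
  rw [smul_zero, Matrix.map_ofReal_eq_zero_iff] at hN hBη
  have hG' := Matrix.eq_smul_of_map_ofReal_eq_smul hG
  have hB' := Matrix.eq_smul_of_map_ofReal_eq_smul (c := c - ε) (by simpa using hB)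
  refine ⟨?_, by rw [hG', hB']; module, ?_, by rw [hN, hBη, sub_zero], hG', hN⟩
  · refine Matrix.map_ofReal_eq_zero_iff.mp ((smul_eq_zero.mp hθ).resolve_left ?_)
    exact mul_ne_zero (div_ne_zero hs0 two_ne_zero) hl₁p
  · refine Matrix.map_ofReal_eq_zero_iff.mp ((smul_eq_zero.mp hβ).resolve_left ?_)
    exact mul_ne_zero (div_ne_zero hs0 (mul_ne_zero two_ne_zero ht0)) hl₁m

theorem stmt_1_general {m k : ℕ}
    (U : Set (Fin m → ℝ))
    (ε c : ℝ) (hε : ε = 1 ∨ ε = -1) (hc : c ≠ 0) (hεc : ε * c ≠ 1)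
    (s t : ℂ) (hs : s ^ 2 = (ε : ℂ) * (c : ℂ)) (ht : t ^ 2 = 1 - (ε : ℂ) * (c : ℂ))
    (θ : (Fin m → ℝ) → (Fin m → ℝ) → Matrix (Fin m) (Fin 1) ℝ)
    (ω : (Fin m → ℝ) → (Fin m → ℝ) → Matrix (Fin m) (Fin m) ℝ)
    (β : (Fin m → ℝ) → (Fin m → ℝ) → Matrix (Fin m) (Fin k) ℝ)
    (η : (Fin m → ℝ) → (Fin m → ℝ) → Matrix (Fin k) (Fin k) ℝ)
    (S : Set ℂ) (hSinf : S.Infinite)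
    (hMC : ∀ lam ∈ S, ∀ x ∈ U, ∀ X Y : Fin m → ℝ,
      exd (fun u Z => Atilde θ ω β η ε s t lam u Z) x X Y
        + (Atilde θ ω β η ε s t lam x X * Atilde θ ω β η ε s t lam x Y
            - Atilde θ ω β η ε s t lam x Y * Atilde θ ω β η ε s t lam x X) = 0) :
    (∀ x ∈ U, ∀ X Y : Fin m → ℝ,
      exd θ x X Y + (ω x X * θ x Y - ω x Y * θ x X) = 0) ∧
    (∀ x ∈ U, ∀ X Y : Fin m → ℝ,
      exd ω x X Y + (ω x X * ω x Y - ω x Y * ω x X)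
        - ε • (θ x X * (θ x Y)ᵀ - θ x Y * (θ x X)ᵀ)
        - (β x X * (β x Y)ᵀ - β x Y * (β x X)ᵀ) = 0) ∧
    (∀ x ∈ U, ∀ X Y : Fin m → ℝ,
      exd β x X Y + (ω x X * β x Y - ω x Y * β x X)
        + (β x X * η x Y - β x Y * η x X) = 0) ∧
    (∀ x ∈ U, ∀ X Y : Fin m → ℝ,
      exd η x X Y + (η x X * η x Y - η x Y * η x X)
        - ((β x X)ᵀ * β x Y - (β x Y)ᵀ * β x X) = 0) ∧
    (∀ x ∈ U, ∀ X Y : Fin m → ℝ,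
      exd ω x X Y + (ω x X * ω x Y - ω x Y * ω x X)
        = c • (θ x X * (θ x Y)ᵀ - θ x Y * (θ x X)ᵀ)) ∧
    (∀ x ∈ U, ∀ X Y : Fin m → ℝ,
      exd η x X Y + (η x X * η x Y - η x Y * η x X) = 0) := by
  obtain ⟨l₁, hl₁S, l₂, hl₂S, hl₁, hl₂, hl₁p, hl₁m, hl⟩ := exists_spectral_pair hSinf
  have H := fun x (hx : x ∈ U) X Y => structure_equations_of_spectral_pair hε hc hεc hs ht
    hl₁ hl₂ hl₁p hl₁m hl (hMC l₁ hl₁S x hx X Y) (hMC l₂ hl₂S x hx X Y)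
  exact ⟨fun x hx X Y => (H x hx X Y).1, fun x hx X Y => (H x hx X Y).2.1,
    fun x hx X Y => (H x hx X Y).2.2.1, fun x hx X Y => (H x hx X Y).2.2.2.1,
    fun x hx X Y => (H x hx X Y).2.2.2.2.1, fun x hx X Y => (H x hx X Y).2.2.2.2.2⟩

/-- Converse: if the Maurer–Cartan equation `dÃ^λ + Ã^λ∧Ã^λ = 0` holds on `U` for every
`λ` in some infinite subset `S ⊆ ℂ∖{0}`, then `θ, ω, β, η` satisfy the structural
equations (a)–(d) together with (G) `dω + ω∧ω = c·θ∧θᵀ` and (N) `dη + η∧η = 0` on `U`. -/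
theorem stmt_1 {m k : ℕ} (hm : 1 ≤ m) (hk : 1 ≤ k)
    (U : Set (Fin m → ℝ)) (hU : IsOpen U)
    (ε c : ℝ) (hε : ε = 1 ∨ ε = -1) (hc : c ≠ 0) (hεc : ε * c ≠ 1)
    (s t : ℂ) (hs : s ^ 2 = (ε : ℂ) * (c : ℂ)) (ht : t ^ 2 = 1 - (ε : ℂ) * (c : ℂ))
    (θ : (Fin m → ℝ) → (Fin m → ℝ) → Matrix (Fin m) (Fin 1) ℝ)
    (ω : (Fin m → ℝ) → (Fin m → ℝ) → Matrix (Fin m) (Fin m) ℝ)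
    (β : (Fin m → ℝ) → (Fin m → ℝ) → Matrix (Fin m) (Fin k) ℝ)
    (η : (Fin m → ℝ) → (Fin m → ℝ) → Matrix (Fin k) (Fin k) ℝ)
    (hθlin : ∀ x, IsLinearMap ℝ (θ x)) (hωlin : ∀ x, IsLinearMap ℝ (ω x))
    (hβlin : ∀ x, IsLinearMap ℝ (β x)) (hηlin : ∀ x, IsLinearMap ℝ (η x))
    (hθC : ∀ X i j, ContDiffOn ℝ 1 (fun u => θ u X i j) U)
    (hωC : ∀ X i j, ContDiffOn ℝ 1 (fun u => ω u X i j) U)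
    (hβC : ∀ X i j, ContDiffOn ℝ 1 (fun u => β u X i j) U)
    (hηC : ∀ X i j, ContDiffOn ℝ 1 (fun u => η u X i j) U)
    (hωso : ∀ x X, (ω x X)ᵀ = -ω x X) (hηso : ∀ x X, (η x X)ᵀ = -η x X)
    (S : Set ℂ) (hSinf : S.Infinite) (hS0 : ∀ lam ∈ S, lam ≠ 0)
    (hMC : ∀ lam ∈ S, ∀ x ∈ U, ∀ X Y : Fin m → ℝ,
      exd (fun u Z => Atilde θ ω β η ε s t lam u Z) x X Y
        + (Atilde θ ω β η ε s t lam x X * Atilde θ ω β η ε s t lam x Y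
            - Atilde θ ω β η ε s t lam x Y * Atilde θ ω β η ε s t lam x X) = 0) :
    (∀ x ∈ U, ∀ X Y : Fin m → ℝ,
      exd θ x X Y + (ω x X * θ x Y - ω x Y * θ x X) = 0) ∧
    (∀ x ∈ U, ∀ X Y : Fin m → ℝ,
      exd ω x X Y + (ω x X * ω x Y - ω x Y * ω x X)
        - ε • (θ x X * (θ x Y)ᵀ - θ x Y * (θ x X)ᵀ)
        - (β x X * (β x Y)ᵀ - β x Y * (β x X)ᵀ) = 0) ∧
    (∀ x ∈ U, ∀ X Y : Fin m → ℝ,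
      exd β x X Y + (ω x X * β x Y - ω x Y * β x X)
        + (β x X * η x Y - β x Y * η x X) = 0) ∧
    (∀ x ∈ U, ∀ X Y : Fin m → ℝ,
      exd η x X Y + (η x X * η x Y - η x Y * η x X)
        - ((β x X)ᵀ * β x Y - (β x Y)ᵀ * β x X) = 0) ∧
    (∀ x ∈ U, ∀ X Y : Fin m → ℝ,
      exd ω x X Y + (ω x X * ω x Y - ω x Y * ω x X)
        = c • (θ x X * (θ x Y)ᵀ - θ x Y * (θ x X)ᵀ)) ∧
    (∀ x ∈ U, ∀ X Y : Fin m → ℝ,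
      exd η x X Y + (η x X * η x Y - η x Y * η x X) = 0) :=
  stmt_1_general U ε c hε hc hεc s t hs ht θ ω β η S hSinf hMC
end

section
/- A loop ξ with all coefficients in so_ε(n+1) belongs to Λ_1 if and only if there exist a column vector a ∈ ℝ^m, A ∈ so(m), B ∈ so(n−m) and C ∈ Mat_{m×(n−m)}(ℝ) such that ξ(λ) is the block matrix with first row (0, −ε(λ+λ⁻¹)aᵀ, 0), second row ((λ+λ⁻¹)a, A, (λ−λ⁻¹)C), third row (0, −(λ−λ⁻¹)Cᵀ, B); equivalently ξ = λξ₁ + ξ₀ + λ⁻¹ξ₋₁ where ξ₀ = diag(0, A, B), ξ₁ has blocks (0,mid) = −εaᵀ, (mid,0) = a, (mid,bot) = C, (bot,mid) = −Cᵀ and all other blocks zero, and ξ₋₁ = Qξ₁Q. -/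
open Matrix

/-- The matrix `J = diag(ε, 1, …, 1)`. -/
def Jmat (m k : ℕ) (ε : ℝ) : Matrix (Idx m k) (Idx m k) ℝ :=
  blk3 (ε • 1) 0 0 0 1 0 0 0 1

/-- `so_ε(n+1) = {X : Xᵀ J + J X = 0}`. -/
def soeps (m k : ℕ) (ε : ℝ) : Set (Matrix (Idx m k) (Idx m k) ℝ) :=
  {X | Xᵀ * Jmat m k ε + Jmat m k ε * X = 0}

/-- `Λ_d`: loops with coefficients in `so_ε(n+1)`, fixed by `σ` and `τ`, of degree at most `d`. -/
def LambdaD (m k : ℕ) (ε : ℝ) (d : ℕ) :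
    Set (LaurentPolynomial (Matrix (Idx m k) (Idx m k) ℝ)) :=
  {ξ | (∀ j : ℤ, ξ.coeff j ∈ soeps m k ε) ∧
    (∀ j : ℤ, ((-1 : ℝ) ^ j) • (Pmat ℝ m k * ξ.coeff j * Pmat ℝ m k) = ξ.coeff j) ∧
    (∀ j : ℤ, ξ.coeff (-j) = Qmat ℝ m k * ξ.coeff j * Qmat ℝ m k) ∧
    (∀ j : ℤ, (d : ℤ) < |j| → ξ.coeff j = 0)}

def sP {m k : ℕ} : Idx m k → ℝ
  | Sum.inl _ => -1
  | Sum.inr (Sum.inl _) => 1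
  | Sum.inr (Sum.inr _) => -1

def sQ {m k : ℕ} : Idx m k → ℝ
  | Sum.inl _ => 1
  | Sum.inr (Sum.inl _) => 1
  | Sum.inr (Sum.inr _) => -1

def dJ (ε : ℝ) {m k : ℕ} : Idx m k → ℝ
  | Sum.inl _ => ε
  | _ => 1

lemma Pmat_eq (m k : ℕ) : Pmat ℝ m k = Matrix.diagonal sP := by
  ext i j
  rcases i with a | a | a <;> rcases j with b | b | b <;>
    simp [Pmat, blk3, Matrix.diagonal_apply, sP, Matrix.one_apply, Fin.ext_iff,
      Sum.inl.injEq, Sum.inr.injEq, eq_iff_true_of_subsingleton] <;>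
    (try split_ifs <;> simp_all)

lemma Qmat_eq (m k : ℕ) : Qmat ℝ m k = Matrix.diagonal sQ := by
  ext i j
  rcases i with a | a | a <;> rcases j with b | b | b <;>
    simp [Qmat, blk3, Matrix.diagonal_apply, sQ, Matrix.one_apply, Fin.ext_iff,
      Sum.inl.injEq, Sum.inr.injEq, eq_iff_true_of_subsingleton] <;>
    (try split_ifs <;> simp_all)

lemma Jmat_eq (m k : ℕ) (ε : ℝ) : Jmat m k ε = Matrix.diagonal (dJ ε) := by
  ext i j
  rcases i with a | a | a <;> rcases j with b | b | b <;>
    simp [Jmat, blk3, Matrix.diagonal_apply, dJ, Matrix.one_apply, Fin.ext_iff,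
      Sum.inl.injEq, Sum.inr.injEq, eq_iff_true_of_subsingleton] <;>
    (try split_ifs <;> simp_all)

lemma conj_apply {m k : ℕ} (d : Idx m k → ℝ) (X : Matrix (Idx m k) (Idx m k) ℝ)
    (i j : Idx m k) :
    (Matrix.diagonal d * X * Matrix.diagonal d) i j = d i * X i j * d j := by
  rw [Matrix.mul_diagonal, Matrix.diagonal_mul]

lemma entry_of_eq {m k : ℕ} {X Y : Matrix (Idx m k) (Idx m k) ℝ} (h : X = Y)
    (i j : Idx m k) : X i j = Y i j := by rw [h]

lemma so_entry {m k : ℕ} {ε : ℝ} {X : Matrix (Idx m k) (Idx m k) ℝ}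
    (h : X ∈ soeps m k ε) (i j : Idx m k) :
    X j i * dJ ε j + dJ ε i * X i j = 0 := by
  have h' : (Xᵀ * Jmat m k ε + Jmat m k ε * X) i j = (0 : Matrix (Idx m k) (Idx m k) ℝ) i j := by
    rw [h]
  rw [Jmat_eq] at h'
  simpa [Matrix.add_apply, Matrix.mul_diagonal, Matrix.diagonal_mul,
    Matrix.transpose_apply] using h'

/-- Characterization of `Λ₁`: a loop `ξ` with coefficients in `so_ε(n+1)` lies in `Λ₁`
iff `ξ = λξ₁ + ξ₀ + λ⁻¹ξ₋₁` with `ξ₀ = diag(0, A, B)` (`A ∈ so(m)`, `B ∈ so(n−m)`),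
`ξ₁` having blocks `(0,mid) = −εaᵀ`, `(mid,0) = a`, `(mid,bot) = C`, `(bot,mid) = −Cᵀ`
and all other blocks zero, and `ξ₋₁ = Qξ₁Q`. -/
theorem stmt_6 {m k : ℕ} (hm : 1 ≤ m) (hk : 1 ≤ k) (ε : ℝ) (hε : ε = 1 ∨ ε = -1)
    (ξ : LaurentPolynomial (Matrix (Idx m k) (Idx m k) ℝ))
    (hso : ∀ j : ℤ, ξ.coeff j ∈ soeps m k ε) :
    ξ ∈ LambdaD m k ε 1 ↔
      ∃ (a : Matrix (Fin m) (Fin 1) ℝ) (A : Matrix (Fin m) (Fin m) ℝ)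
        (B : Matrix (Fin k) (Fin k) ℝ) (C : Matrix (Fin m) (Fin k) ℝ),
        Aᵀ = -A ∧ Bᵀ = -B ∧
        ξ.coeff 0 = blk3 0 0 0 0 A 0 0 0 B ∧
        ξ.coeff 1 = blk3 0 ((-ε) • aᵀ) 0 a 0 C 0 (-Cᵀ) 0 ∧
        ξ.coeff (-1) = Qmat ℝ m k * ξ.coeff 1 * Qmat ℝ m k ∧
        (∀ j : ℤ, j ≠ 0 → j ≠ 1 → j ≠ -1 → ξ.coeff j = 0) := by
  have hε0 : ε ≠ 0 := by rcases hε with rfl | rfl <;> norm_num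
  constructor
  · rintro ⟨-, hσ, hτ, hdeg⟩
    -- entrywise consequences of σ at 0 and 1, τ at 0
    have hσ0 : ∀ i j : Idx m k, sP i * ξ.coeff 0 i j * sP j = ξ.coeff 0 i j := by
      intro i j
      have e := hσ 0
      rw [zpow_zero, one_smul, Pmat_eq] at e
      have e' := entry_of_eq e i j
      rwa [conj_apply] at e'
    have hσ1 : ∀ i j : Idx m k, -(sP i * ξ.coeff 1 i j * sP j) = ξ.coeff 1 i j := by
      intro i j
      have e := hσ 1
      rw [zpow_one, Pmat_eq] at e
      have e' := entry_of_eq e i j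
      rw [Matrix.smul_apply, conj_apply] at e'
      simpa using e'
    have hτ0 : ∀ i j : Idx m k, sQ i * ξ.coeff 0 i j * sQ j = ξ.coeff 0 i j := by
      intro i j
      have e := hτ 0
      rw [neg_zero, Qmat_eq] at e
      have e' := entry_of_eq e i j
      rw [conj_apply] at e'
      exact e'.symm
    refine ⟨Matrix.of fun p q => ξ.coeff 1 (Sum.inr (Sum.inl p)) (Sum.inl q),
      Matrix.of fun p q => ξ.coeff 0 (Sum.inr (Sum.inl p)) (Sum.inr (Sum.inl q)),
      Matrix.of fun p q => ξ.coeff 0 (Sum.inr (Sum.inr p)) (Sum.inr (Sum.inr q)),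
      Matrix.of fun p q => ξ.coeff 1 (Sum.inr (Sum.inl p)) (Sum.inr (Sum.inr q)),
      ?_, ?_, ?_, ?_, ?_, ?_⟩
    · ext p q
      have := so_entry (hso 0) (Sum.inr (Sum.inl p)) (Sum.inr (Sum.inl q))
      simp only [dJ] at this
      simp only [Matrix.transpose_apply, Matrix.neg_apply, Matrix.of_apply]
      linarith
    · ext p q
      have := so_entry (hso 0) (Sum.inr (Sum.inr p)) (Sum.inr (Sum.inr q))
      simp only [dJ] at this
      simp only [Matrix.transpose_apply, Matrix.neg_apply, Matrix.of_apply]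
      linarith
    · ext i j
      rcases i with p | p | p <;> rcases j with q | q | q
      · -- (0,0)
        have := so_entry (hso 0) (Sum.inl p) (Sum.inl q)
        simp only [dJ, Subsingleton.elim q p] at this
        have hx : ξ.coeff 0 (Sum.inl p) (Sum.inl p) = 0 := by
          rcases hε with rfl | rfl <;> linarith
        simp [blk3, Subsingleton.elim q p, hx]
      · have := hσ0 (Sum.inl p) (Sum.inr (Sum.inl q))
        simp only [sP] at this
        simp only [blk3, Matrix.of_apply, Matrix.zero_apply]
        linarith
      · have := hτ0 (Sum.inl p) (Sum.inr (Sum.inr q))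
        simp only [sQ] at this
        simp only [blk3, Matrix.of_apply, Matrix.zero_apply]
        linarith
      · have := hσ0 (Sum.inr (Sum.inl p)) (Sum.inl q)
        simp only [sP] at this
        simp only [blk3, Matrix.of_apply, Matrix.zero_apply]
        linarith
      · simp [blk3]
      · have := hσ0 (Sum.inr (Sum.inl p)) (Sum.inr (Sum.inr q))
        simp only [sP] at this
        simp only [blk3, Matrix.of_apply, Matrix.zero_apply]
        linarith
      · have := hτ0 (Sum.inr (Sum.inr p)) (Sum.inl q)
        simp only [sQ] at this
        simp only [blk3, Matrix.of_apply, Matrix.zero_apply]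
        linarith
      · have := hσ0 (Sum.inr (Sum.inr p)) (Sum.inr (Sum.inl q))
        simp only [sP] at this
        simp only [blk3, Matrix.of_apply, Matrix.zero_apply]
        linarith
      · simp [blk3]
    · ext i j
      rcases i with p | p | p <;> rcases j with q | q | q
      · have := hσ1 (Sum.inl p) (Sum.inl q)
        simp only [sP] at this
        simp only [blk3, Matrix.of_apply, Matrix.zero_apply]
        linarith
      · -- (0,mid) : -ε aᵀ
        have := so_entry (hso 1) (Sum.inl p) (Sum.inr (Sum.inl q))
        simp only [dJ] at this
        simp only [blk3, Matrix.of_apply, Matrix.smul_apply, Matrix.transpose_apply,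
          Matrix.of_apply, smul_eq_mul]
        rcases hε with rfl | rfl <;> ring_nf <;> linarith
      · have := hσ1 (Sum.inl p) (Sum.inr (Sum.inr q))
        simp only [sP] at this
        simp only [blk3, Matrix.of_apply, Matrix.zero_apply]
        linarith
      · simp [blk3]
      · have := hσ1 (Sum.inr (Sum.inl p)) (Sum.inr (Sum.inl q))
        simp only [sP] at this
        simp only [blk3, Matrix.of_apply, Matrix.zero_apply]
        linarith
      · simp [blk3]
      · have := hσ1 (Sum.inr (Sum.inr p)) (Sum.inl q)
        simp only [sP] at this
        simp only [blk3, Matrix.of_apply, Matrix.zero_apply]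
        linarith
      · -- (bot,mid) : -Cᵀ
        have := so_entry (hso 1) (Sum.inr (Sum.inl q)) (Sum.inr (Sum.inr p))
        simp only [dJ] at this
        simp only [blk3, Matrix.of_apply, Matrix.neg_apply, Matrix.transpose_apply,
          Matrix.of_apply]
        linarith
      · have := hσ1 (Sum.inr (Sum.inr p)) (Sum.inr (Sum.inr q))
        simp only [sP] at this
        simp only [blk3, Matrix.of_apply, Matrix.zero_apply]
        linarith
    · exact hτ 1
    · intro j hj0 hj1 hjm1
      refine hdeg j ?_
      rcases abs_cases j with ⟨h1, h2⟩ | ⟨h1, h2⟩ <;> omega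
  · rintro ⟨a, A, B, C, hA, hB, h0, h1, hm1, hz⟩
    refine ⟨hso, ?_, ?_, ?_⟩
    · intro j
      rcases eq_or_ne j 0 with rfl | hj0
      · rw [zpow_zero, one_smul, h0, Pmat_eq]
        ext i j
        rw [conj_apply]
        rcases i with p | p | p <;> rcases j with q | q | q <;>
          simp [sP, blk3] <;> ring
      · rcases eq_or_ne j 1 with rfl | hj1
        · rw [zpow_one, h1, Pmat_eq]
          ext i j
          rw [Matrix.smul_apply, conj_apply]
          rcases i with p | p | p <;> rcases j with q | q | q <;>
            simp [sP, blk3] <;> ring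
        · rcases eq_or_ne j (-1) with rfl | hjm
          · have hpow : ((-1 : ℝ) ^ (-1 : ℤ)) = -1 := by
              norm_num
            rw [hpow, hm1, h1, Pmat_eq, Qmat_eq]
            ext i j
            rw [Matrix.smul_apply, conj_apply, conj_apply]
            rcases i with p | p | p <;> rcases j with q | q | q <;>
              simp [sP, sQ, blk3] <;> ring
          · rw [hz j hj0 hj1 hjm]
            simp
    · intro j
      rcases eq_or_ne j 0 with rfl | hj0
      · rw [neg_zero, h0, Qmat_eq]
        ext i j
        rw [conj_apply]
        rcases i with p | p | p <;> rcases j with q | q | q <;>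
          simp [sQ, blk3] <;> ring
      · rcases eq_or_ne j 1 with rfl | hj1
        · exact hm1
        · rcases eq_or_ne j (-1) with rfl | hjm
          · rw [hm1, h1, Qmat_eq]
            show ξ.coeff 1 = _
            rw [h1]
            ext i j
            rw [conj_apply, conj_apply]
            rcases i with p | p | p <;> rcases j with q | q | q <;>
              simp [sQ, blk3] <;> ring
          · rw [hz j hj0 hj1 hjm,
              hz (-j) (by omega) (by omega) (by omega)]
            simp
    · intro j hj
      refine hz j ?_ ?_ ?_ <;> rintro rfl <;> norm_num at hj
end

section
/- Let V, Ṽ : 𝒢 → 𝒢 be differentiable ad-equivariant maps which commute pointwise, i.e. [V(ζ), Ṽ(ζ)] = 0 for all ζ ∈ 𝒢 (as the paper notes, this pointwise commutativity accompanies ad-equivariance). Then for every ξ ∈ 𝒦, the Lie bracket of the vector fields X^V and X^Ṽ is given by (DX^Ṽ)_ξ(X^V(ξ)) − (DX^V)_ξ(X^Ṽ(ξ)) = [ξ, π_𝒜([π_𝒫V(ξ), π_𝒫Ṽ(ξ)])]. -/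
/-- Modified AKS bracket computation (Lemma 4.2): for pointwise-commuting ad-equivariant
vector fields `V, W` on a Lie algebra `𝒢 = 𝒫 ⊕ 𝒜 ⊕ ℳ` (with `𝒜`, `𝒦 = 𝒜 ⊕ 𝒫`,
`ℬ = 𝒜 ⊕ ℳ` subalgebras and `[𝒜,𝒫] ⊆ 𝒫`, `[𝒜,ℳ] ⊆ ℳ`), the Lie bracket of the
vector fields `X^V(ξ) = [ξ, π_𝒫 V(ξ)]` and `X^W` at `ξ ∈ 𝒦` is
`[ξ, π_𝒜[π_𝒫V(ξ), π_𝒫W(ξ)]]`. The Lie bracket is supplied as a bilinear map `br`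
(antisymmetric and satisfying the Jacobi identity) on the finite-dimensional normed
space `L`. -/
theorem stmt_9 {L : Type*} [NormedAddCommGroup L] [NormedSpace ℝ L] [FiniteDimensional ℝ L]
    (br : L →ₗ[ℝ] L →ₗ[ℝ] L)
    (hanti : ∀ x y : L, br x y = -br y x)
    (hjac : ∀ x y z : L, br x (br y z) = br (br x y) z + br y (br x z))
    (P A M : Submodule ℝ L)
    (πP πA πM : L →ₗ[ℝ] L)
    (hPmem : ∀ x, πP x ∈ P) (hAmem : ∀ x, πA x ∈ A) (hMmem : ∀ x, πM x ∈ M)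
    (hsum : ∀ x, πP x + πA x + πM x = x)
    (hPid : ∀ x ∈ P, πP x = x) (hPA : ∀ x ∈ A, πP x = 0) (hPM : ∀ x ∈ M, πP x = 0)
    (hAid : ∀ x ∈ A, πA x = x) (hAP : ∀ x ∈ P, πA x = 0) (hAM : ∀ x ∈ M, πA x = 0)
    (hMid : ∀ x ∈ M, πM x = x) (hMP : ∀ x ∈ P, πM x = 0) (hMA : ∀ x ∈ A, πM x = 0)
    (hAsub : ∀ x ∈ A, ∀ y ∈ A, br x y ∈ A)
    (hKsub : ∀ x ∈ A ⊔ P, ∀ y ∈ A ⊔ P, br x y ∈ A ⊔ P)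
    (hBsub : ∀ x ∈ A ⊔ M, ∀ y ∈ A ⊔ M, br x y ∈ A ⊔ M)
    (hAPbr : ∀ x ∈ A, ∀ y ∈ P, br x y ∈ P)
    (hAMbr : ∀ x ∈ A, ∀ y ∈ M, br x y ∈ M)
    (V W : L → L) (hV : Differentiable ℝ V) (hW : Differentiable ℝ W)
    (hVad : ∀ ξ η : L, fderiv ℝ V ξ (br ξ η) = br (V ξ) η)
    (hWad : ∀ ξ η : L, fderiv ℝ W ξ (br ξ η) = br (W ξ) η)
    (hcomm : ∀ ζ : L, br (V ζ) (W ζ) = 0) :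
    ∀ ξ ∈ (A ⊔ P : Submodule ℝ L),
      fderiv ℝ (fun ζ => br ζ (πP (W ζ))) ξ (br ξ (πP (V ξ)))
        - fderiv ℝ (fun ζ => br ζ (πP (V ζ))) ξ (br ξ (πP (W ξ)))
        = br ξ (πA (br (πP (V ξ)) (πP (W ξ)))) := by
  -- Derivative of the vector field ζ ↦ [ζ, πP U(ζ)]
  have hderiv : ∀ (U : L → L), Differentiable ℝ U → ∀ (x h : L),
      fderiv ℝ (fun ζ => br ζ (πP (U ζ))) x h
        = br h (πP (U x)) + br x (πP (fderiv ℝ U x h)) := by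
    intro U hU x h
    set πPc : L →L[ℝ] L := LinearMap.toContinuousLinearMap πP with hπPc
    set Bc : L →L[ℝ] L →L[ℝ] L :=
      LinearMap.toContinuousLinearMap
        (((LinearMap.toContinuousLinearMap :
            (L →ₗ[ℝ] L) ≃ₗ[ℝ] (L →L[ℝ] L)) : (L →ₗ[ℝ] L) →ₗ[ℝ] (L →L[ℝ] L)).comp br) with hBcdef
    have hBcApp : ∀ a b : L, Bc a b = br a b := fun a b => rfl
    have hc : HasFDerivAt (fun ζ : L => Bc ζ) Bc x := Bc.hasFDerivAt
    have hu : HasFDerivAt (fun ζ : L => πPc (U ζ)) (πPc.comp (fderiv ℝ U x)) x :=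
      (πPc.hasFDerivAt.comp x (hU x).hasFDerivAt)
    have H := hc.clm_apply hu
    have hfun : (fun ζ : L => br ζ (πP (U ζ))) = fun ζ : L => Bc ζ (πPc (U ζ)) := rfl
    rw [hfun, H.fderiv]
    simp only [ContinuousLinearMap.add_apply, ContinuousLinearMap.comp_apply,
      ContinuousLinearMap.flip_apply, hBcApp]
    have hπ : ∀ y, πPc y = πP y := fun y => rfl
    rw [hπ, hπ]
    abel
  -- projections vanish appropriately
  have hKzero : ∀ x ∈ (A ⊔ P : Submodule ℝ L), πM x = 0 := by
    intro x hx
    rcases Submodule.mem_sup.1 hx with ⟨a, ha, p, hp, rfl⟩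
    rw [map_add, hMA a ha, hMP p hp, add_zero]
  have hBzero : ∀ x ∈ (A ⊔ M : Submodule ℝ L), πP x = 0 := by
    intro x hx
    rcases Submodule.mem_sup.1 hx with ⟨a, ha, m, hm, rfl⟩
    rw [map_add, hPA a ha, hPM m hm, add_zero]
  intro ξ hξ
  set pV := πP (V ξ) with hpVdef
  set pW := πP (W ξ) with hpWdef
  set aV := πA (V ξ) with haVdef
  set aW := πA (W ξ) with haWdef
  set mV := πM (V ξ) with hmVdef
  set mW := πM (W ξ) with hmWdef
  have hpVP : pV ∈ P := hPmem _
  have hpWP : pW ∈ P := hPmem _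
  have hVdec : V ξ = pV + aV + mV := (hsum (V ξ)).symm
  have hWdec : W ξ = pW + aW + mW := (hsum (W ξ)).symm
  -- derivative values
  have hDW := hderiv W hW ξ (br ξ pV)
  rw [hWad ξ pV] at hDW
  have hDV := hderiv V hV ξ (br ξ pW)
  rw [hVad ξ pW] at hDV
  rw [← hpWdef] at hDW
  rw [← hpVdef] at hDV
  rw [hDW, hDV]
  -- expansion of the commutativity relation
  have hexp : (0 : L) = br pV pW + br pV aW + br pV mW + br aV pW + br aV aW
      + br aV mW + br mV pW + br mV aW + br mV mW := by
    calc (0 : L) = br (V ξ) (W ξ) := (hcomm ξ).symm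
      _ = _ := by
          rw [hVdec, hWdec]
          simp only [map_add, LinearMap.add_apply]
          abel
  have hps := congrArg πP hexp
  simp only [map_add, map_zero] at hps
  have z1 : πP (br aV aW) = 0 := hPA _ (hAsub _ (hAmem _) _ (hAmem _))
  have z2 : πP (br aV mW) = 0 := hPM _ (hAMbr _ (hAmem _) _ (hMmem _))
  have z3 : πP (br mV aW) = 0 := by
    rw [hanti mV aW, map_neg, hPM _ (hAMbr _ (hAmem _) _ (hMmem _)), neg_zero]
  have z4 : πP (br mV mW) = 0 :=
    hBzero _ (hBsub _ (Submodule.mem_sup_right (hMmem _)) _ (Submodule.mem_sup_right (hMmem _)))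
  have i1 : πP (br pV aW) = -br aW pV := by
    rw [hanti pV aW, map_neg, hPid _ (hAPbr _ (hAmem _) _ hpVP)]
  have i2 : πP (br aV pW) = br aV pW := hPid _ (hAPbr _ (hAmem _) _ hpWP)
  rw [z1, z2, z3, z4, i1, i2, add_zero, add_zero, add_zero, add_zero] at hps
  -- hps : 0 = πP (br pV pW) + -br aW pV + πP (br pV mW) + br aV pW + πP (br mV pW)
  -- expand the two πP-terms in the goal
  have eW : πP (br (W ξ) pV) = -πP (br pV pW) + br aW pV + -πP (br pV mW) := by
    rw [hWdec]
    simp only [map_add, LinearMap.add_apply]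
    rw [hanti pW pV, map_neg, hanti mW pV, map_neg,
      hPid _ (hAPbr _ (hAmem _) _ hpVP)]
  have eV : πP (br (V ξ) pW) = πP (br pV pW) + br aV pW + πP (br mV pW) := by
    rw [hVdec]
    simp only [map_add, LinearMap.add_apply]
    rw [hPid _ (hAPbr _ (hAmem _) _ hpWP)]
  -- Jacobi identity rearranged
  have jac : br (br ξ pV) pW - br (br ξ pW) pV = br ξ (br pV pW) := by
    rw [hjac ξ pV pW, hanti pV (br ξ pW)]
    abel
  -- πA on K-elements
  have hmemK : br pV pW ∈ (A ⊔ P : Submodule ℝ L) :=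
    hKsub _ (Submodule.mem_sup_right hpVP) _ (Submodule.mem_sup_right hpWP)
  have hAeq : πA (br pV pW) = br pV pW - πP (br pV pW) := by
    have h := hsum (br pV pW)
    rw [hKzero _ hmemK, add_zero] at h
    linear_combination (norm := module) h
  rw [eW, eV, hAeq]
  -- push br ξ inside and finish with linear algebra
  have hb := congrArg (br ξ) hps
  simp only [map_add, map_neg, map_zero, map_sub] at hb ⊢
  linear_combination (norm := module) jac + hb
end

section
/- Let V₁,…,V_m : 𝒢 → 𝒢 be continuously differentiable ad-equivariant maps that commute pairwise pointwise ([V_i(ζ),V_j(ζ)] = 0 for all ζ ∈ 𝒢 and all i,j) and satisfy π_𝒜([π_𝒫V_i(ξ), π_𝒫V_j(ξ)]) = 0 for all ξ ∈ 𝒦 and all i,j. Then: (1) for every ξ₀ ∈ 𝒦 there exist an open neighborhood U of 0 in ℝ^m and a continuously differentiable map ξ : U → 𝒢 with values in 𝒦 such that ξ(0) = ξ₀ and ∂ξ/∂x^i = [ξ, π_𝒫V_i(ξ)] on U for i = 1,…,m, and any two such solutions agree on some neighborhood of 0; (2) for any such solution ξ, the maps Ã_i := π_𝒫V_i(ξ(·))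 : U → 𝒢 satisfy the Maurer–Cartan equations ∂Ã_j/∂x^i − ∂Ã_i/∂x^j + [Ã_i, Ã_j] = 0 on U for all i, j. -/
/-- A solution on `U` of the Lax system `∂ξ/∂x^i = [ξ, π_𝒫 V_i(ξ)]`, `ξ(0) = ξ₀`,
with values in the subalgebra `𝒦`. -/
def IsLaxSol {L : Type*} [NormedAddCommGroup L] [NormedSpace ℝ L] {N : ℕ}
    (br : L →ₗ[ℝ] L →ₗ[ℝ] L) (πP : L →ₗ[ℝ] L) (K : Submodule ℝ L)
    (V : Fin N → L → L) (ξ₀ : L)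
    (U : Set (Fin N → ℝ)) (ξ : (Fin N → ℝ) → L) : Prop :=
  IsOpen U ∧ (0 : Fin N → ℝ) ∈ U ∧ ContDiffOn ℝ 1 ξ U ∧ (∀ x ∈ U, ξ x ∈ K) ∧
    ξ 0 = ξ₀ ∧
    ∀ x ∈ U, ∀ i : Fin N, fderiv ℝ ξ x (Pi.single i 1) = br (ξ x) (πP (V i (ξ x)))

section Alg
variable {L : Type*} [AddCommGroup L] [Module ℝ L]
variable (br : L →ₗ[ℝ] L →ₗ[ℝ] L)
variable (P A M : Submodule ℝ L) (πP πA πM : L →ₗ[ℝ] L)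

/-- elements of `A ⊔ P` have zero `M`-component -/
theorem aks_piM_eq_zero (hMP : ∀ x ∈ P, πM x = 0) (hMA : ∀ x ∈ A, πM x = 0)
    {y : L} (hy : y ∈ A ⊔ P) : πM y = 0 := by
  obtain ⟨a, ha, p, hp, rfl⟩ := Submodule.mem_sup.1 hy
  simp [map_add, hMA a ha, hMP p hp]

theorem aks_piP_eq_zero_of_B (hPM : ∀ x ∈ M, πP x = 0) (hPA : ∀ x ∈ A, πP x = 0)
    {y : L} (hy : y ∈ A ⊔ M) : πP y = 0 := by
  obtain ⟨a, ha, m, hm, rfl⟩ := Submodule.mem_sup.1 hy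
  simp [map_add, hPA a ha, hPM m hm]

/-- the core Maurer–Cartan algebra identity -/
theorem aks_core
    (hanti : ∀ x y : L, br x y = -br y x)
    (hPmem : ∀ x, πP x ∈ P) (hAmem : ∀ x, πA x ∈ A) (hMmem : ∀ x, πM x ∈ M)
    (hsum : ∀ x, πP x + πA x + πM x = x)
    (hPid : ∀ x ∈ P, πP x = x) (hPA : ∀ x ∈ A, πP x = 0) (hPM : ∀ x ∈ M, πP x = 0)
    (hMP : ∀ x ∈ P, πM x = 0) (hMA : ∀ x ∈ A, πM x = 0)
    (hAsub : ∀ x ∈ A, ∀ y ∈ A, br x y ∈ A)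
    (hKsub : ∀ x ∈ A ⊔ P, ∀ y ∈ A ⊔ P, br x y ∈ A ⊔ P)
    (hBsub : ∀ x ∈ A ⊔ M, ∀ y ∈ A ⊔ M, br x y ∈ A ⊔ M)
    (hAPbr : ∀ x ∈ A, ∀ y ∈ P, br x y ∈ P)
    (hAMbr : ∀ x ∈ A, ∀ y ∈ M, br x y ∈ M)
    (u v : L) (huv : br u v = 0) (hA0' : πA (br (πP u) (πP v)) = 0) :
    πP (br u (πP v)) - πP (br v (πP u)) = br (πP u) (πP v) := by
  set p₁ := πP u; set a₁ := πA u; set m₁ := πM u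
  set p₂ := πP v; set a₂ := πA v; set m₂ := πM v
  have hu : p₁ + a₁ + m₁ = u := hsum u
  have hv : p₂ + a₂ + m₂ = v := hsum v
  -- br p₁ p₂ ∈ K and its A and M parts vanish, so πP (br p₁ p₂) = br p₁ p₂
  have hppK : br p₁ p₂ ∈ A ⊔ P :=
    hKsub _ (Submodule.mem_sup_right (hPmem u)) _ (Submodule.mem_sup_right (hPmem v))
  have hppM : πM (br p₁ p₂) = 0 := aks_piM_eq_zero P A πM hMP hMA hppK
  have hppP : πP (br p₁ p₂) = br p₁ p₂ := by
    have := hsum (br p₁ p₂)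
    rw [hA0', hppM] at this; simpa using this
  -- various vanishing statements
  have hPaa : πP (br a₁ a₂) = 0 := hPA _ (hAsub _ (hAmem u) _ (hAmem v))
  have hPam : πP (br a₁ m₂) = 0 := hPM _ (hAMbr _ (hAmem u) _ (hMmem v))
  have hPma : πP (br m₁ a₂) = 0 := by
    rw [hanti m₁ a₂, map_neg, hPM _ (hAMbr _ (hAmem v) _ (hMmem u)), neg_zero]
  have hPmm : πP (br m₁ m₂) = 0 :=
    aks_piP_eq_zero_of_B A M πP hPM hPA
      (hBsub _ (Submodule.mem_sup_right (hMmem u)) _ (Submodule.mem_sup_right (hMmem v)))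
  have hPap : πP (br a₁ p₂) = br a₁ p₂ := hPid _ (hAPbr _ (hAmem u) _ (hPmem v))
  have hPpa : πP (br p₁ a₂) = - br a₂ p₁ := by
    rw [hanti p₁ a₂, map_neg, hPid _ (hAPbr _ (hAmem v) _ (hPmem u))]
  -- expand 0 = πP (br u v)
  have hexp : br p₁ p₂ + (- br a₂ p₁) + πP (br p₁ m₂) + br a₁ p₂
      + πP (br m₁ p₂) = 0 := by
    have h0 : πP (br u v) = 0 := by rw [huv, map_zero]
    rw [← hu, ← hv] at h0
    simp only [map_add, LinearMap.add_apply] at h0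
    rw [hPaa, hPam, hPma, hPmm, hppP, hPap, hPpa] at h0
    abel_nf at h0 ⊢
    exact h0
  -- expand the goal
  have e1 : πP (br u p₂) = br p₁ p₂ + br a₁ p₂ + πP (br m₁ p₂) := by
    rw [← hu]; simp only [map_add, LinearMap.add_apply]
    rw [hppP, hPap]
  have e2 : πP (br v p₁) = - br p₁ p₂ + br a₂ p₁ + πP (br m₂ p₁) := by
    rw [← hv]; simp only [map_add, LinearMap.add_apply]
    have : πP (br p₂ p₁) = - br p₁ p₂ := by
      rw [hanti p₂ p₁, map_neg, hppP]
    rw [this, hPid _ (hAPbr _ (hAmem v) _ (hPmem u))]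
  have e3 : πP (br p₁ m₂) = - πP (br m₂ p₁) := by
    rw [hanti p₁ m₂, map_neg]
  rw [e1, e2]
  rw [e3] at hexp
  have : br p₁ p₂ + br a₁ p₂ + πP (br m₁ p₂) - (-br p₁ p₂ + br a₂ p₁ + πP (br m₂ p₁))
      = (br p₁ p₂ + -br a₂ p₁ + -πP (br m₂ p₁) + br a₁ p₂ + πP (br m₁ p₂)) + br p₁ p₂ := by
    abel
  rw [this, hexp, zero_add]
end Alg

noncomputable section Calc
variable {L : Type*} [NormedAddCommGroup L] [NormedSpace ℝ L] [FiniteDimensional ℝ L]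

/-- the bracket as a continuous bilinear map -/
def aks_brc (br : L →ₗ[ℝ] L →ₗ[ℝ] L) : L →L[ℝ] L →L[ℝ] L :=
  LinearMap.toContinuousLinearMap
    { toFun := fun x => LinearMap.toContinuousLinearMap (br x)
      map_add' := by intro a b; ext z; simp
      map_smul' := by intro c a; ext z; simp }

@[simp] theorem aks_brc_apply (br : L →ₗ[ℝ] L →ₗ[ℝ] L) (x y : L) :
    aks_brc br x y = br x y := rfl

variable (br : L →ₗ[ℝ] L →ₗ[ℝ] L) (πP : L →ₗ[ℝ] L)

/-- derivative of the Lax vector field `F i = fun y => br y (πP (V i y))` -/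
theorem aks_hasFDerivAt_F {N : ℕ} (V : Fin N → L → L) (hV : ∀ i, ContDiff ℝ 1 (V i))
    (i : Fin N) (y : L) :
    ∃ D : L →L[ℝ] L, HasFDerivAt (fun z => br z (πP (V i z))) D y ∧
      ∀ v, D v = br v (πP (V i y)) + br y (πP (fderiv ℝ (V i) y v)) := by
  have hVd : HasFDerivAt (V i) (fderiv ℝ (V i) y) y :=
    ((hV i).differentiable one_ne_zero y).hasFDerivAt
  have h2 : HasFDerivAt (fun z => πP.toContinuousLinearMap (V i z))
      (πP.toContinuousLinearMap.comp (fderiv ℝ (V i) y)) y :=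
    πP.toContinuousLinearMap.hasFDerivAt.comp y hVd
  refine ⟨_, (aks_brc br).hasFDerivAt_of_bilinear (hasFDerivAt_id y) h2, fun v => ?_⟩
  simp [ContinuousLinearMap.precompR, add_comm]

theorem aks_differentiable_F {N : ℕ} (V : Fin N → L → L) (hV : ∀ i, ContDiff ℝ 1 (V i))
    (i : Fin N) (y : L) : DifferentiableAt ℝ (fun z => br z (πP (V i z))) y := by
  obtain ⟨D, hD, -⟩ := aks_hasFDerivAt_F br πP V hV i y
  exact hD.differentiableAt

theorem aks_fderiv_F_apply {N : ℕ} (V : Fin N → L → L) (hV : ∀ i, ContDiff ℝ 1 (V i))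
    (i : Fin N) (y v : L) :
    fderiv ℝ (fun z => br z (πP (V i z))) y v
      = br v (πP (V i y)) + br y (πP (fderiv ℝ (V i) y v)) := by
  obtain ⟨D, hD, happ⟩ := aks_hasFDerivAt_F br πP V hV i y
  rw [hD.fderiv]; exact happ v

theorem aks_contDiff_F {N : ℕ} (V : Fin N → L → L) (hV : ∀ i, ContDiff ℝ 1 (V i))
    (i : Fin N) : ContDiff ℝ 1 (fun z => br z (πP (V i z))) := by
  have h1 : ContDiff ℝ 1 fun z : L => πP.toContinuousLinearMap (V i z) :=
    πP.toContinuousLinearMap.contDiff.comp (hV i)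
  have := (aks_brc br).isBoundedBilinearMap.contDiff.comp (contDiff_id.prodMk h1)
  exact this

end Calc

section Sym
variable {L : Type*} [NormedAddCommGroup L] [NormedSpace ℝ L] [FiniteDimensional ℝ L]
variable (br : L →ₗ[ℝ] L →ₗ[ℝ] L)
variable (P A M : Submodule ℝ L) (πP πA πM : L →ₗ[ℝ] L)

/-- Symmetry of `DF_i(y) F_j(y)` on `𝒦`, the Frobenius integrability condition. -/
theorem aks_sym
    (hanti : ∀ x y : L, br x y = -br y x)
    (hjac : ∀ x y z : L, br x (br y z) = br (br x y) z + br y (br x z))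
    (hPmem : ∀ x, πP x ∈ P) (hAmem : ∀ x, πA x ∈ A) (hMmem : ∀ x, πM x ∈ M)
    (hsum : ∀ x, πP x + πA x + πM x = x)
    (hPid : ∀ x ∈ P, πP x = x) (hPA : ∀ x ∈ A, πP x = 0) (hPM : ∀ x ∈ M, πP x = 0)
    (hMP : ∀ x ∈ P, πM x = 0) (hMA : ∀ x ∈ A, πM x = 0)
    (hAsub : ∀ x ∈ A, ∀ y ∈ A, br x y ∈ A)
    (hKsub : ∀ x ∈ A ⊔ P, ∀ y ∈ A ⊔ P, br x y ∈ A ⊔ P)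
    (hBsub : ∀ x ∈ A ⊔ M, ∀ y ∈ A ⊔ M, br x y ∈ A ⊔ M)
    (hAPbr : ∀ x ∈ A, ∀ y ∈ P, br x y ∈ P)
    (hAMbr : ∀ x ∈ A, ∀ y ∈ M, br x y ∈ M)
    {N : ℕ} (V : Fin N → L → L) (hV : ∀ i, ContDiff ℝ 1 (V i))
    (hVad : ∀ i, ∀ ξ η : L, fderiv ℝ (V i) ξ (br ξ η) = br (V i ξ) η)
    (hcomm : ∀ i j, ∀ ζ : L, br (V i ζ) (V j ζ) = 0)
    (hA0 : ∀ i j, ∀ ξ ∈ (A ⊔ P : Submodule ℝ L),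
      πA (br (πP (V i ξ)) (πP (V j ξ))) = 0)
    (i j : Fin N) (y : L) (hy : y ∈ A ⊔ P) :
    fderiv ℝ (fun z => br z (πP (V i z))) y (br y (πP (V j y)))
      = fderiv ℝ (fun z => br z (πP (V j z))) y (br y (πP (V i y))) := by
  set p₁ := πP (V i y) with hp₁
  set p₂ := πP (V j y) with hp₂
  rw [aks_fderiv_F_apply br πP V hV i y, aks_fderiv_F_apply br πP V hV j y]
  rw [hVad i y p₂, hVad j y p₁]
  -- core identity
  have hcore : πP (br (V i y) p₂) - πP (br (V j y) p₁) = br p₁ p₂ := by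
    have := aks_core br P A M πP πA πM hanti hPmem hAmem hMmem hsum hPid hPA hPM hMP hMA
      hAsub hKsub hBsub hAPbr hAMbr (V i y) (V j y) (hcomm i j y) (hA0 i j y hy)
    exact this
  -- Jacobi: br y (br p₁ p₂) = br (br y p₁) p₂ + br p₁ (br y p₂)
  have hJ := hjac y p₁ p₂
  have key : br y (πP (br (V i y) p₂)) - br y (πP (br (V j y) p₁)) = br y (br p₁ p₂) := by
    rw [← map_sub (br y), ← map_sub πP]
    · rw [show πP ((br (V i y)) p₂ - (br (V j y)) p₁) = br p₁ p₂ from by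
        rw [map_sub]; exact hcore]
  have hanti' : br (br y p₂) p₁ = - br p₁ (br y p₂) := hanti _ _
  -- goal: br (br y p₂) p₁ + br y (πP (br (V i y) p₂)) = br (br y p₁) p₂ + br y (πP (br (V j y) p₁))
  have : br (br y p₂) p₁ - br (br y p₁) p₂ = - br y (br p₁ p₂) := by
    rw [hanti']
    linear_combination (norm := abel_nf) hJ
  linear_combination (norm := (simp only [p₁, p₂]; abel_nf)) key + this
end Sym

section MC
variable {L : Type*} [NormedAddCommGroup L] [NormedSpace ℝ L] [FiniteDimensional ℝ L]
variable (br : L →ₗ[ℝ] L →ₗ[ℝ] L)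
variable (P A M : Submodule ℝ L) (πP πA πM : L →ₗ[ℝ] L)

theorem aks_fderiv_comp_apply {N : ℕ} (V : Fin N → L → L) (hV : ∀ i, ContDiff ℝ 1 (V i))
    (j : Fin N) (ξ : (Fin N → ℝ) → L) (x : Fin N → ℝ) (hξ : DifferentiableAt ℝ ξ x)
    (v : Fin N → ℝ) :
    fderiv ℝ (fun y => πP (V j (ξ y))) x v
      = πP (fderiv ℝ (V j) (ξ x) (fderiv ℝ ξ x v)) := by
  have hVj : HasFDerivAt (V j) (fderiv ℝ (V j) (ξ x)) (ξ x) :=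
    ((hV j).differentiable one_ne_zero (ξ x)).hasFDerivAt
  have h : HasFDerivAt (fun y => πP.toContinuousLinearMap (V j (ξ y)))
      ((πP.toContinuousLinearMap.comp (fderiv ℝ (V j) (ξ x))).comp (fderiv ℝ ξ x)) x :=
    (πP.toContinuousLinearMap.hasFDerivAt.comp (ξ x) hVj).comp x hξ.hasFDerivAt
  have := h.fderiv
  have h2 : fderiv ℝ (fun y => πP (V j (ξ y))) x
      = (πP.toContinuousLinearMap.comp (fderiv ℝ (V j) (ξ x))).comp (fderiv ℝ ξ x) := this
  rw [h2]; rfl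

/-- pointwise Maurer–Cartan identity for solutions of the Lax system -/
theorem aks_mc
    (hanti : ∀ x y : L, br x y = -br y x)
    (hPmem : ∀ x, πP x ∈ P) (hAmem : ∀ x, πA x ∈ A) (hMmem : ∀ x, πM x ∈ M)
    (hsum : ∀ x, πP x + πA x + πM x = x)
    (hPid : ∀ x ∈ P, πP x = x) (hPA : ∀ x ∈ A, πP x = 0) (hPM : ∀ x ∈ M, πP x = 0)
    (hMP : ∀ x ∈ P, πM x = 0) (hMA : ∀ x ∈ A, πM x = 0)
    (hAsub : ∀ x ∈ A, ∀ y ∈ A, br x y ∈ A)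
    (hKsub : ∀ x ∈ A ⊔ P, ∀ y ∈ A ⊔ P, br x y ∈ A ⊔ P)
    (hBsub : ∀ x ∈ A ⊔ M, ∀ y ∈ A ⊔ M, br x y ∈ A ⊔ M)
    (hAPbr : ∀ x ∈ A, ∀ y ∈ P, br x y ∈ P)
    (hAMbr : ∀ x ∈ A, ∀ y ∈ M, br x y ∈ M)
    {N : ℕ} (V : Fin N → L → L) (hV : ∀ i, ContDiff ℝ 1 (V i))
    (hVad : ∀ i, ∀ ξ η : L, fderiv ℝ (V i) ξ (br ξ η) = br (V i ξ) η)
    (hcomm : ∀ i j, ∀ ζ : L, br (V i ζ) (V j ζ) = 0)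
    (hA0 : ∀ i j, ∀ ξ ∈ (A ⊔ P : Submodule ℝ L),
      πA (br (πP (V i ξ)) (πP (V j ξ))) = 0)
    (ξ : (Fin N → ℝ) → L) (x : Fin N → ℝ) (hξ : DifferentiableAt ℝ ξ x)
    (hK : ξ x ∈ (A ⊔ P : Submodule ℝ L))
    (i j : Fin N)
    (hi : fderiv ℝ ξ x (Pi.single i 1) = br (ξ x) (πP (V i (ξ x))))
    (hj : fderiv ℝ ξ x (Pi.single j 1) = br (ξ x) (πP (V j (ξ x)))) :
    fderiv ℝ (fun y => πP (V j (ξ y))) x (Pi.single i 1)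
      - fderiv ℝ (fun y => πP (V i (ξ y))) x (Pi.single j 1)
      + br (πP (V i (ξ x))) (πP (V j (ξ x))) = 0 := by
  set p₁ := πP (V i (ξ x))
  set p₂ := πP (V j (ξ x))
  rw [aks_fderiv_comp_apply πP V hV j ξ x hξ, aks_fderiv_comp_apply πP V hV i ξ x hξ,
    hi, hj, hVad j (ξ x) p₁, hVad i (ξ x) p₂]
  have hcore := aks_core br P A M πP πA πM hanti hPmem hAmem hMmem hsum hPid hPA hPM hMP hMA
    hAsub hKsub hBsub hAPbr hAMbr (V i (ξ x)) (V j (ξ x)) (hcomm i j (ξ x)) (hA0 i j (ξ x) hK)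
  linear_combination (norm := (simp only [p₁, p₂]; abel_nf)) -hcore
end MC

noncomputable section Ana
open intervalIntegral Set
open scoped NNReal
variable {L : Type*} [NormedAddCommGroup L] [NormedSpace ℝ L] [FiniteDimensional ℝ L]
variable {N : ℕ}

/-- the Picard integral operator for the Lax system along the cube `[0,1]` -/
def aksT (G : Fin N → L → L) (hGc : ∀ i, Continuous (G i)) (ξ₀ : L) (x : Fin N → ℝ)
    (φ : C(Icc (0:ℝ) 1, L)) : C(Icc (0:ℝ) 1, L) :=
  ⟨fun t => ξ₀ + ∫ s in (0:ℝ)..(t:ℝ), ∑ i, x i • G i (φ (projIcc (0:ℝ) 1 zero_le_one s)),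
   by
    refine continuous_const.add ?_
    have hcont : Continuous fun s : ℝ => ∑ i, x i • G i (φ (projIcc (0:ℝ) 1 zero_le_one s)) := by
      refine continuous_finset_sum _ fun i _ => Continuous.const_smul ?_ _
      exact (hGc i).comp (φ.continuous.comp (continuous_projIcc))
    exact (intervalIntegral.continuous_primitive
      (fun a b => hcont.intervalIntegrable a b) 0).comp continuous_subtype_val⟩

theorem aksT_apply (G : Fin N → L → L) (hGc : ∀ i, Continuous (G i)) (ξ₀ : L) (x : Fin N → ℝ)
    (φ : C(Icc (0:ℝ) 1, L)) (t : Icc (0:ℝ) 1) :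
    aksT G hGc ξ₀ x φ t
      = ξ₀ + ∫ s in (0:ℝ)..(t:ℝ), ∑ i, x i • G i (φ (projIcc (0:ℝ) 1 zero_le_one s)) := rfl

theorem aks_integrand_continuous (G : Fin N → L → L) (hGc : ∀ i, Continuous (G i))
    (x : Fin N → ℝ) (φ : C(Icc (0:ℝ) 1, L)) :
    Continuous fun s : ℝ => ∑ i, x i • G i (φ (projIcc (0:ℝ) 1 zero_le_one s)) := by
  refine continuous_finset_sum _ fun i _ => Continuous.const_smul ?_ _
  exact (hGc i).comp (φ.continuous.comp (continuous_projIcc))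

theorem aks_contraction (G : Fin N → L → L) (hGc : ∀ i, Continuous (G i)) (ξ₀ : L)
    (Λ : ℝ) (hΛ : 0 ≤ Λ) (hLip : ∀ i, LipschitzWith Λ.toNNReal (G i))
    (x : Fin N → ℝ) (hhalf : (N : ℝ) * ‖x‖ * Λ ≤ 1 / 2) :
    ContractingWith (1 / 2 : ℝ≥0) (aksT G hGc ξ₀ x) := by
  constructor
  · have h12 : ((1/2:ℝ≥0):ℝ) < ((1:ℝ≥0):ℝ) := by norm_num
    exact_mod_cast h12
  · refine LipschitzWith.of_dist_le_mul fun φ ψ => ?_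
    have h0 : (0 : ℝ) ≤ ((1 / 2 : ℝ≥0) : ℝ) * dist φ ψ := by positivity
    rw [ContinuousMap.dist_le h0]
    intro t
    rw [aksT_apply, aksT_apply, dist_eq_norm]
    have hsub : (ξ₀ + ∫ s in (0:ℝ)..(t:ℝ), ∑ i, x i • G i (φ (projIcc (0:ℝ) 1 zero_le_one s)))
        - (ξ₀ + ∫ s in (0:ℝ)..(t:ℝ), ∑ i, x i • G i (ψ (projIcc (0:ℝ) 1 zero_le_one s)))
        = ∫ s in (0:ℝ)..(t:ℝ), (∑ i, x i • G i (φ (projIcc (0:ℝ) 1 zero_le_one s)))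
            - ∑ i, x i • G i (ψ (projIcc (0:ℝ) 1 zero_le_one s)) := by
      rw [intervalIntegral.integral_sub
        ((aks_integrand_continuous G hGc x φ).intervalIntegrable _ _)
        ((aks_integrand_continuous G hGc x ψ).intervalIntegrable _ _)]
      abel
    rw [hsub]
    have hboundpt : ∀ s : ℝ,
        ‖(∑ i, x i • G i (φ (projIcc (0:ℝ) 1 zero_le_one s)))
          - ∑ i, x i • G i (ψ (projIcc (0:ℝ) 1 zero_le_one s))‖
        ≤ (N : ℝ) * ‖x‖ * Λ * dist φ ψ := by
      intro s
      rw [← Finset.sum_sub_distrib]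
      refine (norm_sum_le _ _).trans ?_
      have : ∀ i ∈ Finset.univ, ‖x i • G i (φ (projIcc (0:ℝ) 1 zero_le_one s))
          - x i • G i (ψ (projIcc (0:ℝ) 1 zero_le_one s))‖ ≤ ‖x‖ * (Λ * dist φ ψ) := by
        intro i _
        rw [← smul_sub, norm_smul]
        have h1 : ‖x i‖ ≤ ‖x‖ := norm_le_pi_norm x i
        have h2 : ‖G i (φ (projIcc (0:ℝ) 1 zero_le_one s))
            - G i (ψ (projIcc (0:ℝ) 1 zero_le_one s))‖ ≤ Λ * dist φ ψ := by
          have := (hLip i).dist_le_mul (φ (projIcc (0:ℝ) 1 zero_le_one s))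
            (ψ (projIcc (0:ℝ) 1 zero_le_one s))
          rw [← dist_eq_norm]
          refine this.trans ?_
          have hcoe : ((Λ.toNNReal : ℝ≥0) : ℝ) = Λ := Real.coe_toNNReal Λ hΛ
          rw [hcoe]
          exact mul_le_mul_of_nonneg_left (ContinuousMap.dist_apply_le_dist _) hΛ
        exact mul_le_mul h1 h2 (norm_nonneg _) (norm_nonneg _)
      refine (Finset.sum_le_sum this).trans ?_
      rw [Finset.sum_const, Finset.card_univ, Fintype.card_fin, nsmul_eq_mul]
      ring_nf
      exact le_refl _
    have := intervalIntegral.norm_integral_le_of_norm_le_const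
      (C := (N : ℝ) * ‖x‖ * Λ * dist φ ψ) (a := (0:ℝ)) (b := (t:ℝ))
      (fun s _ => hboundpt s)
    refine this.trans ?_
    have ht : |(t:ℝ) - 0| ≤ 1 := by
      rw [sub_zero, abs_of_nonneg t.2.1]; exact t.2.2
    have hC : (0:ℝ) ≤ (N : ℝ) * ‖x‖ * Λ * dist φ ψ := by positivity
    calc (N : ℝ) * ‖x‖ * Λ * dist φ ψ * |(t:ℝ) - 0|
        ≤ (N : ℝ) * ‖x‖ * Λ * dist φ ψ * 1 := by
          exact mul_le_mul_of_nonneg_left ht hC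
      _ = (N : ℝ) * ‖x‖ * Λ * dist φ ψ := by ring
      _ ≤ 1 / 2 * dist φ ψ := by
          apply mul_le_mul_of_nonneg_right hhalf dist_nonneg
      _ = ((1 / 2 : ℝ≥0) : ℝ) * dist φ ψ := by norm_num
end Ana

noncomputable section Sol
open intervalIntegral Set Filter
open scoped NNReal Topology
variable {L : Type*} [NormedAddCommGroup L] [NormedSpace ℝ L] [FiniteDimensional ℝ L]
variable {N : ℕ}

/-- the local solution as limit of Picard iterates (junk value outside the contraction regime) -/
def aksSol (G : Fin N → L → L) (hGc : ∀ i, Continuous (G i)) (ξ₀ : L) (x : Fin N → ℝ) :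
    C(Icc (0:ℝ) 1, L) :=
  limUnder atTop fun n => (aksT G hGc ξ₀ x)^[n] (ContinuousMap.const _ ξ₀)

variable (G : Fin N → L → L) (hGc : ∀ i, Continuous (G i)) (ξ₀ : L)

theorem aksSol_eq_fixedPoint {x : Fin N → ℝ}
    (hc : ContractingWith (1/2 : ℝ≥0) (aksT G hGc ξ₀ x)) :
    aksSol G hGc ξ₀ x = ContractingWith.fixedPoint (aksT G hGc ξ₀ x) hc :=
  (hc.tendsto_iterate_fixedPoint (ContinuousMap.const _ ξ₀)).limUnder_eq

theorem aksSol_isFixedPt {x : Fin N → ℝ}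
    (hc : ContractingWith (1/2 : ℝ≥0) (aksT G hGc ξ₀ x)) :
    aksT G hGc ξ₀ x (aksSol G hGc ξ₀ x) = aksSol G hGc ξ₀ x := by
  rw [aksSol_eq_fixedPoint G hGc ξ₀ hc]
  exact hc.fixedPoint_isFixedPt

theorem aksSol_apply {x : Fin N → ℝ}
    (hc : ContractingWith (1/2 : ℝ≥0) (aksT G hGc ξ₀ x)) (t : Icc (0:ℝ) 1) :
    aksSol G hGc ξ₀ x t
      = ξ₀ + ∫ s in (0:ℝ)..(t:ℝ),
          ∑ i, x i • G i (aksSol G hGc ξ₀ x (projIcc (0:ℝ) 1 zero_le_one s)) := by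
  conv_lhs => rw [← aksSol_isFixedPt G hGc ξ₀ hc]
  rfl

theorem aksSol_zero : aksSol G hGc ξ₀ 0 = ContinuousMap.const _ ξ₀ := by
  have hfix : aksT G hGc ξ₀ 0 (ContinuousMap.const _ ξ₀) = ContinuousMap.const _ ξ₀ := by
    ext t
    rw [aksT_apply]
    simp
  have : ∀ n, (aksT G hGc ξ₀ 0)^[n] (ContinuousMap.const _ ξ₀) = ContinuousMap.const _ ξ₀ := by
    intro n
    induction n with
    | zero => rfl
    | succ n ih => rw [Function.iterate_succ_apply', ih, hfix]
  unfold aksSol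
  simp only [this]
  exact Filter.Tendsto.limUnder_eq tendsto_const_nhds

theorem aksSol_mem (K : Submodule ℝ L) (πK : L →L[ℝ] L) (hπK : ∀ y : L, πK y = y ↔ y ∈ K)
    (hGK : ∀ i, ∀ y ∈ K, G i y ∈ K) (hξ₀ : ξ₀ ∈ K) {x : Fin N → ℝ}
    (hc : ContractingWith (1/2 : ℝ≥0) (aksT G hGc ξ₀ x)) (t : Icc (0:ℝ) 1) :
    aksSol G hGc ξ₀ x t ∈ K := by
  set SK : Set C(Icc (0:ℝ) 1, L) := {φ | ∀ t, φ t ∈ K} with hSK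
  have hclosed : IsClosed SK := by
    have : SK = ⋂ t : Icc (0:ℝ) 1, (fun φ : C(Icc (0:ℝ) 1, L) => φ t) ⁻¹' (K : Set L) := by
      ext φ; simp [hSK, Set.mem_iInter]
    rw [this]
    exact isClosed_iInter fun t =>
      (Submodule.closed_of_finiteDimensional K).preimage (continuous_eval_const t)
  have hmaps : ∀ φ ∈ SK, aksT G hGc ξ₀ x φ ∈ SK := by
    intro φ hφ t
    rw [aksT_apply]
    have hint : (∫ s in (0:ℝ)..(t:ℝ),
        ∑ i, x i • G i (φ (projIcc (0:ℝ) 1 zero_le_one s))) ∈ K := by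
      rw [← hπK]
      rw [← ContinuousLinearMap.intervalIntegral_comp_comm _
        ((aks_integrand_continuous G hGc x φ).intervalIntegrable _ _)]
      congr 1
      ext s
      exact (hπK _).mpr (Submodule.sum_mem _ fun i _ =>
        Submodule.smul_mem _ _ (hGK i _ (hφ _)))
    exact Submodule.add_mem _ hξ₀ hint
  have hiter : ∀ n, (aksT G hGc ξ₀ x)^[n] (ContinuousMap.const _ ξ₀) ∈ SK := by
    intro n
    induction n with
    | zero => intro t; exact hξ₀
    | succ n ih => rw [Function.iterate_succ_apply']; exact hmaps _ ih
  have htend := hc.tendsto_iterate_fixedPoint (ContinuousMap.const _ ξ₀)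
  have hmem : aksSol G hGc ξ₀ x ∈ SK := by
    rw [aksSol_eq_fixedPoint G hGc ξ₀ hc]
    exact hclosed.mem_of_tendsto htend (Filter.Eventually.of_forall hiter)
  exact hmem t

theorem aksSol_dist_center (B : ℝ) (hB : 0 ≤ B) (hGB : ∀ i y, ‖G i y‖ ≤ B) {x : Fin N → ℝ}
    (hc : ContractingWith (1/2 : ℝ≥0) (aksT G hGc ξ₀ x)) (t : Icc (0:ℝ) 1) :
    ‖aksSol G hGc ξ₀ x t - ξ₀‖ ≤ (N : ℝ) * ‖x‖ * B := by
  rw [aksSol_apply G hGc ξ₀ hc t]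
  rw [add_sub_cancel_left]
  have hbd : ∀ s : ℝ, ‖∑ i, x i • G i (aksSol G hGc ξ₀ x (projIcc (0:ℝ) 1 zero_le_one s))‖
      ≤ (N : ℝ) * ‖x‖ * B := by
    intro s
    refine (norm_sum_le _ _).trans ?_
    have : ∀ i ∈ Finset.univ, ‖x i • G i (aksSol G hGc ξ₀ x (projIcc (0:ℝ) 1 zero_le_one s))‖
        ≤ ‖x‖ * B := by
      intro i _
      rw [norm_smul]
      exact mul_le_mul (norm_le_pi_norm x i) (hGB i _) (norm_nonneg _) (norm_nonneg _)
    refine (Finset.sum_le_sum this).trans ?_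
    rw [Finset.sum_const, Finset.card_univ, Fintype.card_fin, nsmul_eq_mul]
    ring_nf
    exact le_refl _
  refine (intervalIntegral.norm_integral_le_of_norm_le_const (fun s _ => hbd s)).trans ?_
  have ht : |(t:ℝ) - 0| ≤ 1 := by
    rw [sub_zero, abs_of_nonneg t.2.1]; exact t.2.2
  have hC : (0:ℝ) ≤ (N : ℝ) * ‖x‖ * B := by positivity
  calc (N : ℝ) * ‖x‖ * B * |(t:ℝ) - 0| ≤ (N : ℝ) * ‖x‖ * B * 1 :=
        mul_le_mul_of_nonneg_left ht hC
    _ = (N : ℝ) * ‖x‖ * B := by ring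

end Sol

noncomputable section Sol2
open intervalIntegral Set Filter
open scoped NNReal Topology
variable {L : Type*} [NormedAddCommGroup L] [NormedSpace ℝ L] [FiniteDimensional ℝ L]
variable {N : ℕ}

theorem aks_lipschitzWith {g : L → L} (hg : ContDiff ℝ 1 g) {Λ : ℝ} (hΛ : 0 ≤ Λ)
    (hb : ∀ y, ‖fderiv ℝ g y‖ ≤ Λ) : LipschitzWith Λ.toNNReal g := by
  refine lipschitzWith_of_nnnorm_fderiv_le (hg.differentiable one_ne_zero) fun y => ?_
  rw [← NNReal.coe_le_coe, coe_nnnorm, Real.coe_toNNReal _ hΛ]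
  exact hb y

/-- uniform quadratic Taylor estimate from uniform continuity of the derivative -/
theorem aks_quad {g : L → L} (hg : ContDiff ℝ 1 g)
    (hUC : UniformContinuous fun y => fderiv ℝ g y) {ε : ℝ} (hε : 0 < ε) :
    ∃ dq > 0, ∀ a b : L, ‖b - a‖ ≤ dq → ‖g b - g a - fderiv ℝ g a (b - a)‖ ≤ ε * ‖b - a‖ := by
  rw [Metric.uniformContinuous_iff] at hUC
  obtain ⟨dq, hdq, hq⟩ := hUC ε hε
  refine ⟨dq / 2, by linarith, fun a b hab => ?_⟩
  have key : ∀ z ∈ Metric.closedBall a (dq / 2),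
      HasFDerivWithinAt (fun z => g z - fderiv ℝ g a z)
        (fderiv ℝ g z - fderiv ℝ g a) (Metric.closedBall a (dq / 2)) z := by
    intro z _
    exact (((hg.differentiable one_ne_zero z).hasFDerivAt).sub
      ((fderiv ℝ g a).hasFDerivAt)).hasFDerivWithinAt
  have hbound : ∀ z ∈ Metric.closedBall a (dq / 2), ‖fderiv ℝ g z - fderiv ℝ g a‖ ≤ ε := by
    intro z hz
    rw [Metric.mem_closedBall] at hz
    have : dist z a < dq := lt_of_le_of_lt hz (by linarith)
    have := hq this
    rw [dist_eq_norm] at this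
    exact this.le
  have hconv : Convex ℝ (Metric.closedBall a (dq / 2)) := convex_closedBall _ _
  have hmem_a : a ∈ Metric.closedBall a (dq / 2) := Metric.mem_closedBall_self (by linarith)
  have hmem_b : b ∈ Metric.closedBall a (dq / 2) := by
    rw [Metric.mem_closedBall, dist_eq_norm]
    exact hab
  have := hconv.norm_image_sub_le_of_norm_hasFDerivWithin_le key hbound hmem_a hmem_b
  calc ‖g b - g a - fderiv ℝ g a (b - a)‖
      = ‖(g b - fderiv ℝ g a b) - (g a - fderiv ℝ g a a)‖ := by rw [map_sub]; congr 1; abel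
    _ ≤ ε * ‖b - a‖ := this

variable (G : Fin N → L → L) (hGc : ∀ i, Continuous (G i)) (ξ₀ : L)

/-- Lipschitz dependence of the fixed point on the parameter -/
theorem aksSol_lipschitz_param (B : ℝ) (hB : 0 ≤ B) (hGB : ∀ i y, ‖G i y‖ ≤ B)
    {x y : Fin N → ℝ}
    (hcx : ContractingWith (1/2 : ℝ≥0) (aksT G hGc ξ₀ x))
    (hcy : ContractingWith (1/2 : ℝ≥0) (aksT G hGc ξ₀ y)) :
    dist (aksSol G hGc ξ₀ x) (aksSol G hGc ξ₀ y) ≤ 2 * ((N : ℝ) * B * ‖x - y‖) := by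
  have hdistT : ∀ φ : C(Icc (0:ℝ) 1, L),
      dist (aksT G hGc ξ₀ x φ) (aksT G hGc ξ₀ y φ) ≤ (N : ℝ) * B * ‖x - y‖ := by
    intro φ
    have h0 : (0:ℝ) ≤ (N : ℝ) * B * ‖x - y‖ := by positivity
    rw [ContinuousMap.dist_le h0]
    intro t
    rw [aksT_apply, aksT_apply, dist_eq_norm]
    have hsub : (ξ₀ + ∫ s in (0:ℝ)..(t:ℝ), ∑ i, x i • G i (φ (projIcc (0:ℝ) 1 zero_le_one s)))
        - (ξ₀ + ∫ s in (0:ℝ)..(t:ℝ), ∑ i, y i • G i (φ (projIcc (0:ℝ) 1 zero_le_one s)))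
        = ∫ s in (0:ℝ)..(t:ℝ), ∑ i, (x i - y i) • G i (φ (projIcc (0:ℝ) 1 zero_le_one s)) := by
      have heq : ∀ s : ℝ, (∑ i, x i • G i (φ (projIcc (0:ℝ) 1 zero_le_one s)))
          - (∑ i, y i • G i (φ (projIcc (0:ℝ) 1 zero_le_one s)))
          = ∑ i, (x i - y i) • G i (φ (projIcc (0:ℝ) 1 zero_le_one s)) := by
        intro s
        rw [← Finset.sum_sub_distrib]
        congr 1; ext i; rw [sub_smul]
      have := intervalIntegral.integral_sub
        ((aks_integrand_continuous G hGc x φ).intervalIntegrable (μ := MeasureTheory.volume) (0:ℝ) (t:ℝ))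
        ((aks_integrand_continuous G hGc y φ).intervalIntegrable (μ := MeasureTheory.volume) (0:ℝ) (t:ℝ))
      simp_rw [heq] at this
      have h3 : ∀ u v : L, (ξ₀ + u) - (ξ₀ + v) = u - v := fun u v => by abel
      rw [h3, ← this]
    rw [hsub]
    have hbd : ∀ s : ℝ, ‖∑ i, (x i - y i) • G i (φ (projIcc (0:ℝ) 1 zero_le_one s))‖
        ≤ (N : ℝ) * ‖x - y‖ * B := by
      intro s
      refine (norm_sum_le _ _).trans ?_
      have : ∀ i ∈ Finset.univ, ‖(x i - y i) • G i (φ (projIcc (0:ℝ) 1 zero_le_one s))‖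
          ≤ ‖x - y‖ * B := by
        intro i _
        rw [norm_smul]
        have h1 : ‖x i - y i‖ ≤ ‖x - y‖ := by
          have := norm_le_pi_norm (x - y) i
          simpa using this
        exact mul_le_mul h1 (hGB i _) (norm_nonneg _) (norm_nonneg _)
      refine (Finset.sum_le_sum this).trans ?_
      rw [Finset.sum_const, Finset.card_univ, Fintype.card_fin, nsmul_eq_mul]
      ring_nf; exact le_refl _
    refine (intervalIntegral.norm_integral_le_of_norm_le_const (fun s _ => hbd s)).trans ?_
    have ht : |(t:ℝ) - 0| ≤ 1 := by
      rw [sub_zero, abs_of_nonneg t.2.1]; exact t.2.2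
    have hC : (0:ℝ) ≤ (N : ℝ) * ‖x - y‖ * B := by positivity
    calc (N : ℝ) * ‖x - y‖ * B * |(t:ℝ) - 0| ≤ (N : ℝ) * ‖x - y‖ * B * 1 :=
          mul_le_mul_of_nonneg_left ht hC
      _ = (N : ℝ) * B * ‖x - y‖ := by ring
  have := hcx.dist_fixedPoint_fixedPoint_of_dist_le' (aksT G hGc ξ₀ y)
    hcx.fixedPoint_isFixedPt hcy.fixedPoint_isFixedPt hdistT
  rw [aksSol_eq_fixedPoint G hGc ξ₀ hcx, aksSol_eq_fixedPoint G hGc ξ₀ hcy]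
  refine this.trans ?_
  have : (1 : ℝ) - ((1/2 : ℝ≥0) : ℝ) = 1/2 := by norm_num
  rw [this]
  rw [div_le_iff₀ (by norm_num : (0:ℝ) < 1/2)]
  ring_nf
  exact le_refl _

/-- the solution, reparametrized over all of `ℝ` -/
def aksPsi (x : Fin N → ℝ) : ℝ → L :=
  fun r => ξ₀ + ∫ s in (0:ℝ)..r, ∑ i, x i • G i (aksSol G hGc ξ₀ x (projIcc (0:ℝ) 1 zero_le_one s))

theorem aksPsi_hasDerivAt (x : Fin N → ℝ) (r : ℝ) :
    HasDerivAt (aksPsi G hGc ξ₀ x)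
      (∑ i, x i • G i (aksSol G hGc ξ₀ x (projIcc (0:ℝ) 1 zero_le_one r))) r := by
  have hcont := aks_integrand_continuous G hGc x (aksSol G hGc ξ₀ x)
  have := intervalIntegral.integral_hasDerivAt_right
    (hcont.intervalIntegrable 0 r)
    (hcont.stronglyMeasurableAtFilter _ _)
    hcont.continuousAt
  have h2 := (hasDerivAt_const r ξ₀).add this
  rw [zero_add] at h2
  exact h2

theorem aksPsi_continuous (x : Fin N → ℝ) : Continuous (aksPsi G hGc ξ₀ x) := by
  have h : Differentiable ℝ (aksPsi G hGc ξ₀ x) :=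
    fun r => (aksPsi_hasDerivAt G hGc ξ₀ x r).differentiableAt
  exact h.continuous

theorem aksPsi_eq {x : Fin N → ℝ}
    (hc : ContractingWith (1/2 : ℝ≥0) (aksT G hGc ξ₀ x)) (t : Icc (0:ℝ) 1) :
    aksPsi G hGc ξ₀ x (t : ℝ) = aksSol G hGc ξ₀ x t := by
  rw [aksSol_apply G hGc ξ₀ hc t]
  rfl

theorem aksPsi_eq' {x : Fin N → ℝ}
    (hc : ContractingWith (1/2 : ℝ≥0) (aksT G hGc ξ₀ x)) {r : ℝ} (hr : r ∈ Icc (0:ℝ) 1) :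
    aksPsi G hGc ξ₀ x r = aksSol G hGc ξ₀ x (projIcc (0:ℝ) 1 zero_le_one r) := by
  have h := aksPsi_eq G hGc ξ₀ hc (projIcc (0:ℝ) 1 zero_le_one r)
  rw [show ((projIcc (0:ℝ) 1 zero_le_one r : Icc (0:ℝ) 1) : ℝ) = r from by
    rw [projIcc_of_mem zero_le_one hr]] at h
  exact h

end Sol2

noncomputable section WEq
open intervalIntegral Set Filter
open scoped NNReal Topology
variable {L : Type*} [NormedAddCommGroup L] [NormedSpace ℝ L] [FiniteDimensional ℝ L]
variable {N : ℕ}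

theorem aks_swap (D : Fin N → (L →L[ℝ] L)) (g : Fin N → L)
    (hsym : ∀ i j, D i (g j) = D j (g i)) (x h : Fin N → ℝ) (s : ℝ) :
    s • ∑ j, h j • (D j) (∑ i, x i • g i) = ∑ i, x i • (D i) (s • ∑ j, h j • g j) := by
  have l : s • ∑ j, h j • (D j) (∑ i, x i • g i)
      = ∑ j, ∑ i, (s * (h j * x i)) • D j (g i) := by
    rw [Finset.smul_sum]
    congr 1; ext j
    rw [map_sum, Finset.smul_sum, Finset.smul_sum]
    congr 1; ext i
    simp only [map_smul, smul_smul, mul_assoc]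
  have r : ∑ i, x i • (D i) (s • ∑ j, h j • g j)
      = ∑ i, ∑ j, (x i * (s * h j)) • D i (g j) := by
    congr 1; ext i
    rw [map_smul, map_sum, Finset.smul_sum, Finset.smul_sum]
    congr 1; ext j
    simp only [map_smul, smul_smul, mul_assoc]
  rw [l, r, Finset.sum_comm]
  congr 1; ext i; congr 1; ext j
  rw [← hsym i j]
  congr 1
  ring

variable (G : Fin N → L → L) (hGc : ∀ i, Continuous (G i)) (ξ₀ : L)

/-- the variational identity: `t • ∑ h j • G j (ξ t)` solves the linearized integral equation -/
theorem aksW_eq (hG1 : ∀ i, ContDiff ℝ 1 (G i)) (x h : Fin N → ℝ)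
    (hc : ContractingWith (1/2 : ℝ≥0) (aksT G hGc ξ₀ x))
    (hsymK : ∀ s : ℝ, s ∈ Icc (0:ℝ) 1 → ∀ i j,
      fderiv ℝ (G i) (aksSol G hGc ξ₀ x (projIcc (0:ℝ) 1 zero_le_one s))
          (G j (aksSol G hGc ξ₀ x (projIcc (0:ℝ) 1 zero_le_one s)))
        = fderiv ℝ (G j) (aksSol G hGc ξ₀ x (projIcc (0:ℝ) 1 zero_le_one s))
          (G i (aksSol G hGc ξ₀ x (projIcc (0:ℝ) 1 zero_le_one s))))
    (t : Icc (0:ℝ) 1) :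
    (t : ℝ) • ∑ j, h j • G j (aksSol G hGc ξ₀ x t)
      = ∫ s in (0:ℝ)..(t:ℝ),
          ((∑ j, h j • G j (aksSol G hGc ξ₀ x (projIcc (0:ℝ) 1 zero_le_one s)))
            + ∑ i, x i • (fderiv ℝ (G i) (aksSol G hGc ξ₀ x (projIcc (0:ℝ) 1 zero_le_one s)))
                (s • ∑ j, h j • G j (aksSol G hGc ξ₀ x (projIcc (0:ℝ) 1 zero_le_one s)))) := by
  set Y : ℝ → L := fun s => aksSol G hGc ξ₀ x (projIcc (0:ℝ) 1 zero_le_one s) with hY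
  set ψ : ℝ → L := aksPsi G hGc ξ₀ x with hψdef
  -- derivative of w r = r • ∑ j, h j • G j (ψ r)
  set w : ℝ → L := fun r => r • ∑ j, h j • G j (ψ r) with hw
  set w' : ℝ → L := fun r => (∑ j, h j • G j (ψ r))
      + r • ∑ j, h j • (fderiv ℝ (G j) (ψ r)) (∑ i, x i • G i (Y r)) with hw'
  have hψc : Continuous ψ := aksPsi_continuous G hGc ξ₀ x
  have hYc : Continuous Y := (aksSol G hGc ξ₀ x).continuous.comp continuous_projIcc
  have hwderiv : ∀ r : ℝ, HasDerivAt w (w' r) r := by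
    intro r
    have hψd : HasDerivAt ψ (∑ i, x i • G i (Y r)) r := aksPsi_hasDerivAt G hGc ξ₀ x r
    have hsumd : HasDerivAt (fun r => ∑ j, h j • G j (ψ r))
        (∑ j, h j • (fderiv ℝ (G j) (ψ r)) (∑ i, x i • G i (Y r))) r := by
      refine HasDerivAt.fun_sum fun j _ => ?_
      refine HasDerivAt.const_smul _ ?_
      exact (((hG1 j).differentiable one_ne_zero (ψ r)).hasFDerivAt).comp_hasDerivAt r hψd
    have hd := (hasDerivAt_id r).smul hsumd
    simp only [id_eq, one_smul] at hd
    rw [hw']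
    convert hd using 1
    abel
    exact add_comm _ _
  have hw'c : Continuous w' := by
    have h1 : Continuous fun r => ∑ j, h j • G j (ψ r) := by
      refine continuous_finset_sum _ fun j _ => Continuous.const_smul ?_ _
      exact (hGc j).comp hψc
    refine h1.add ?_
    refine (continuous_id.smul ?_)
    refine continuous_finset_sum _ fun j _ => Continuous.const_smul ?_ _
    refine Continuous.clm_apply ?_ ?_
    · exact ((hG1 j).continuous_fderiv one_ne_zero).comp hψc
    · refine continuous_finset_sum _ fun i _ => Continuous.const_smul ?_ _
      exact (hGc i).comp hYc
  have hftc : ∫ s in (0:ℝ)..(t:ℝ), w' s = w (t:ℝ) - w 0 := by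
    refine intervalIntegral.integral_eq_sub_of_hasDerivAt (fun r _ => hwderiv r) ?_
    exact hw'c.intervalIntegrable _ _
  have hw0 : w 0 = 0 := by simp [hw]
  have hwt : w (t : ℝ) = (t : ℝ) • ∑ j, h j • G j (aksSol G hGc ξ₀ x t) := by
    have hψt : ψ (t : ℝ) = aksSol G hGc ξ₀ x t := by
      rw [hψdef, aksPsi_eq G hGc ξ₀ hc t]
    rw [hw]
    simp_rw [hψt]
  rw [← hwt, ← sub_zero (w (t:ℝ)), ← hw0, ← hftc]
  -- now replace the integrand on [0, t] using ψ = Y and the symmetry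
  refine intervalIntegral.integral_congr fun s hs => ?_
  have hs' : s ∈ Icc (0:ℝ) 1 := by
    rcases hs with ⟨h1, h2⟩
    constructor
    · exact le_trans (by simp [min_def, t.2.1]) h1
    · refine h2.trans ?_
      simp only [max_def]
      split_ifs with hcase
      · exact t.2.2
      · norm_num
  have hψY : ψ s = Y s := aksPsi_eq' G hGc ξ₀ hc hs'
  simp only [hw']
  simp_rw [hψY]
  congr 1
  exact aks_swap (fun i => fderiv ℝ (G i) (Y s)) (fun i => G i (Y s))
    (fun i j => hsymK s hs' i j) x h s
end WEq

noncomputable section Main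
open intervalIntegral Set Filter
open scoped NNReal Topology
variable {L : Type*} [NormedAddCommGroup L] [NormedSpace ℝ L] [FiniteDimensional ℝ L]
variable {N : ℕ}

theorem aks_sum_bound (x : Fin N → ℝ) (v : Fin N → L) (C : ℝ) (h0 : 0 ≤ C)
    (hC : ∀ i, ‖v i‖ ≤ C) : ‖∑ i, x i • v i‖ ≤ (N : ℝ) * ‖x‖ * C := by
  refine (norm_sum_le _ _).trans ?_
  have : ∀ i ∈ Finset.univ, ‖x i • v i‖ ≤ ‖x‖ * C := by
    intro i _
    rw [norm_smul]
    exact mul_le_mul (norm_le_pi_norm x i) (hC i) (norm_nonneg _) (norm_nonneg _)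
  refine (Finset.sum_le_sum this).trans ?_
  rw [Finset.sum_const, Finset.card_univ, Fintype.card_fin, nsmul_eq_mul]
  ring_nf
  exact le_refl _

variable (G : Fin N → L → L) (hGc : ∀ i, Continuous (G i)) (ξ₀ : L)

def aksOne : Icc (0:ℝ) 1 := ⟨1, by norm_num⟩

set_option maxHeartbeats 2000000 in
theorem aksSol_hasFDerivAt (hN : 0 < N) (hG1 : ∀ i, ContDiff ℝ 1 (G i))
    (B Λ : ℝ) (hB : 0 ≤ B) (hΛ : 0 ≤ Λ)
    (hGB : ∀ i y, ‖G i y‖ ≤ B) (hDGB : ∀ i y, ‖fderiv ℝ (G i) y‖ ≤ Λ)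
    (hUC : ∀ i, UniformContinuous fun y => fderiv ℝ (G i) y)
    (K : Submodule ℝ L) (πK : L →L[ℝ] L) (hπK : ∀ y : L, πK y = y ↔ y ∈ K)
    (hGK : ∀ i, ∀ y ∈ K, G i y ∈ K) (hξ₀ : ξ₀ ∈ K)
    (δ : ℝ) (hδ : 0 < δ) (hδΛ : (N:ℝ) * δ * Λ ≤ 1/2)
    (hsym : ∀ y ∈ K, ‖y - ξ₀‖ ≤ (N:ℝ) * δ * B → ∀ i j,
      fderiv ℝ (G i) y (G j y) = fderiv ℝ (G j) y (G i y))
    (x : Fin N → ℝ) (hx : ‖x‖ < δ) :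
    HasFDerivAt (fun y => aksSol G hGc ξ₀ y aksOne)
      (∑ j, (ContinuousLinearMap.proj (R := ℝ) (φ := fun _ : Fin N => ℝ) j).smulRight
        (G j (aksSol G hGc ξ₀ x aksOne))) x := by
  have hLip : ∀ i, LipschitzWith Λ.toNNReal (G i) :=
    fun i => aks_lipschitzWith (hG1 i) hΛ (hDGB i)
  -- contraction whenever ‖y‖ ≤ δ
  have hcof : ∀ y : Fin N → ℝ, ‖y‖ < δ → ContractingWith (1/2 : ℝ≥0) (aksT G hGc ξ₀ y) := by
    intro y hy
    refine aks_contraction G hGc ξ₀ Λ hΛ hLip y ?_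
    calc (N:ℝ) * ‖y‖ * Λ ≤ (N:ℝ) * δ * Λ := by
          apply mul_le_mul_of_nonneg_right _ hΛ
          exact mul_le_mul_of_nonneg_left hy.le (Nat.cast_nonneg N)
      _ ≤ 1/2 := hδΛ
  have hcx := hcof x hx
  -- symmetry at the solution points
  have hsymsol : ∀ y : Fin N → ℝ, ‖y‖ < δ → ∀ s : ℝ, s ∈ Icc (0:ℝ) 1 → ∀ i j,
      fderiv ℝ (G i) (aksSol G hGc ξ₀ y (projIcc (0:ℝ) 1 zero_le_one s))
          (G j (aksSol G hGc ξ₀ y (projIcc (0:ℝ) 1 zero_le_one s)))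
        = fderiv ℝ (G j) (aksSol G hGc ξ₀ y (projIcc (0:ℝ) 1 zero_le_one s))
          (G i (aksSol G hGc ξ₀ y (projIcc (0:ℝ) 1 zero_le_one s))) := by
    intro y hy s _ i j
    refine hsym _ (aksSol_mem G hGc ξ₀ K πK hπK hGK hξ₀ (hcof y hy) _) ?_ i j
    refine (aksSol_dist_center G hGc ξ₀ B hB hGB (hcof y hy) _).trans ?_
    apply mul_le_mul_of_nonneg_right _ hB
    exact mul_le_mul_of_nonneg_left hy.le (Nat.cast_nonneg N)
  -- quadratic moduli
  rw [hasFDerivAt_iff_isLittleO_nhds_zero, Asymptotics.isLittleO_iff]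
  intro ε' hε'
  set C₁ : ℝ := 2 * (N:ℝ) * B with hC₁def
  have hC₁ : 0 ≤ C₁ := by positivity
  set εq : ℝ := ε' / (4 * ((N:ℝ) * δ * C₁) + 4) with hεqdef
  have hεq : 0 < εq := by positivity
  have Hq : ∀ i : Fin N, ∃ d > 0, ∀ a b : L, ‖b - a‖ ≤ d →
      ‖G i b - G i a - fderiv ℝ (G i) a (b - a)‖ ≤ εq * ‖b - a‖ :=
    fun i => aks_quad (hG1 i) (hUC i) hεq
  choose d hd hquad using Hq
  set dqm : ℝ := Finset.univ.inf' (Finset.univ_nonempty_iff.2 ⟨⟨0, hN⟩⟩) d with hdqm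
  have hdqm_pos : 0 < dqm := by
    rw [hdqm, Finset.lt_inf'_iff]
    exact fun i _ => hd i
  have hdqm_le : ∀ i, dqm ≤ d i := fun i => Finset.inf'_le _ (Finset.mem_univ i)
  -- radius
  set r : ℝ := min (δ - ‖x‖) (min (ε' / (4 * (N:ℝ) * Λ * C₁ + 1)) (dqm / (C₁ + 1))) with hr
  have hrpos : 0 < r := by
    refine lt_min (by linarith) (lt_min (by positivity) (by positivity))
  rw [Filter.eventually_iff_exists_mem]
  refine ⟨Metric.ball 0 r, Metric.ball_mem_nhds 0 hrpos, ?_⟩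
  intro h hh
  rw [Metric.mem_ball, dist_zero_right] at hh
  have hxh : ‖x + h‖ < δ := by
    have h1 : ‖h‖ < δ - ‖x‖ := lt_of_lt_of_le hh (min_le_left _ _)
    calc ‖x + h‖ ≤ ‖x‖ + ‖h‖ := norm_add_le _ _
      _ < δ := by linarith
  have hcxh := hcof (x + h) hxh
  -- names
  set Sol : C(Icc (0:ℝ) 1, L) := aksSol G hGc ξ₀ x with hSol
  set Sol' : C(Icc (0:ℝ) 1, L) := aksSol G hGc ξ₀ (x + h) with hSol'
  set Y : ℝ → L := fun s => Sol (projIcc (0:ℝ) 1 zero_le_one s) with hY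
  set Y' : ℝ → L := fun s => Sol' (projIcc (0:ℝ) 1 zero_le_one s) with hY'
  have hYc : Continuous Y := Sol.continuous.comp continuous_projIcc
  have hY'c : Continuous Y' := Sol'.continuous.comp continuous_projIcc
  -- distance between solutions
  have hD : dist Sol' Sol ≤ C₁ * ‖h‖ := by
    have := aksSol_lipschitz_param G hGc ξ₀ B hB hGB hcxh hcx
    refine this.trans ?_
    have : ‖x + h - x‖ = ‖h‖ := by congr 1; abel
    rw [this, hC₁def]
    ring_nf
    exact le_refl _
  have hYY' : ∀ s : ℝ, ‖Y' s - Y s‖ ≤ C₁ * ‖h‖ := by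
    intro s
    rw [← dist_eq_norm]
    exact (ContinuousMap.dist_apply_le_dist _).trans hD
  -- the candidate w as a continuous map
  set wC : C(Icc (0:ℝ) 1, L) :=
    ⟨fun t => (t : ℝ) • ∑ j, h j • G j (Sol t), by
      refine (continuous_subtype_val.smul ?_)
      refine continuous_finset_sum _ fun j _ => Continuous.const_smul ?_ _
      exact (hGc j).comp Sol.continuous⟩ with hwC
  set R : C(Icc (0:ℝ) 1, L) := Sol' - Sol - wC with hR
  -- integrands
  set i1 : ℝ → L := fun s => ∑ i, (x + h) i • G i (Y' s) with hi1
  set i2 : ℝ → L := fun s => ∑ i, x i • G i (Y s) with hi2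
  set i3 : ℝ → L := fun s => (∑ j, h j • G j (Y s))
      + ∑ i, x i • (fderiv ℝ (G i) (Y s)) (s • ∑ j, h j • G j (Y s)) with hi3
  have hi1c : Continuous i1 := by
    refine continuous_finset_sum _ fun i _ => Continuous.const_smul ?_ _
    exact (hGc i).comp hY'c
  have hi2c : Continuous i2 := by
    refine continuous_finset_sum _ fun i _ => Continuous.const_smul ?_ _
    exact (hGc i).comp hYc
  have hi3c : Continuous i3 := by
    refine Continuous.add ?_ ?_
    · refine continuous_finset_sum _ fun j _ => Continuous.const_smul ?_ _
      exact (hGc j).comp hYc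
    · refine continuous_finset_sum _ fun i _ => Continuous.const_smul ?_ _
      refine Continuous.clm_apply (((hG1 i).continuous_fderiv one_ne_zero).comp hYc) ?_
      refine continuous_id.smul ?_
      refine continuous_finset_sum _ fun j _ => Continuous.const_smul ?_ _
      exact (hGc j).comp hYc
  -- integral formula for R
  have hRint : ∀ t : Icc (0:ℝ) 1, R t = ∫ s in (0:ℝ)..(t:ℝ), (i1 s - i2 s - i3 s) := by
    intro t
    have hE1 : Sol' t = ξ₀ + ∫ s in (0:ℝ)..(t:ℝ), i1 s := aksSol_apply G hGc ξ₀ hcxh t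
    have hE2 : Sol t = ξ₀ + ∫ s in (0:ℝ)..(t:ℝ), i2 s := aksSol_apply G hGc ξ₀ hcx t
    have hE3 : wC t = ∫ s in (0:ℝ)..(t:ℝ), i3 s :=
      aksW_eq G hGc ξ₀ hG1 x h hcx (hsymsol x hx) t
    have hRt : R t = Sol' t - Sol t - wC t := by
      rw [hR]
      simp [ContinuousMap.sub_apply]
    have e : ∫ s in (0:ℝ)..(t:ℝ), (i1 s - i2 s - i3 s)
        = (∫ s in (0:ℝ)..(t:ℝ), i1 s) - (∫ s in (0:ℝ)..(t:ℝ), i2 s)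
          - ∫ s in (0:ℝ)..(t:ℝ), i3 s := by
      rw [intervalIntegral.integral_sub (f := fun s => i1 s - i2 s)
        ((hi1c.sub hi2c).intervalIntegrable _ _) (hi3c.intervalIntegrable _ _),
        intervalIntegral.integral_sub (hi1c.intervalIntegrable _ _) (hi2c.intervalIntegrable _ _)]
    rw [hRt, hE1, hE2, hE3, e]
    abel
  -- pointwise bound on the integrand, for s ∈ [0,1]
  have hptbd : ∀ s : ℝ, s ∈ Icc (0:ℝ) 1 →
      ‖i1 s - i2 s - i3 s‖ ≤ (N:ℝ) * δ * (εq * (C₁ * ‖h‖)) + (N:ℝ) * ‖h‖ * (Λ * (C₁ * ‖h‖))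
        + 1/2 * ‖R‖ := by
    intro s hs
    -- decomposition
    have hdec : i1 s - i2 s - i3 s
        = (∑ i, x i • (G i (Y' s) - G i (Y s) - fderiv ℝ (G i) (Y s) (Y' s - Y s)))
          + (∑ i, x i • (fderiv ℝ (G i) (Y s)) (Y' s - Y s - s • ∑ j, h j • G j (Y s)))
          + ∑ i, h i • (G i (Y' s) - G i (Y s)) := by
      simp only [hi1, hi2, hi3, Pi.add_apply, add_smul, map_sub, smul_sub,
        Finset.sum_add_distrib, Finset.sum_sub_distrib]
      abel
    rw [hdec]
    have bd1 : ‖∑ i, x i • (G i (Y' s) - G i (Y s) - fderiv ℝ (G i) (Y s) (Y' s - Y s))‖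
        ≤ (N:ℝ) * δ * (εq * (C₁ * ‖h‖)) := by
      have hsmall : ‖Y' s - Y s‖ ≤ dqm := by
        refine (hYY' s).trans ?_
        have h1 : ‖h‖ ≤ dqm / (C₁ + 1) :=
          le_of_lt (lt_of_lt_of_le hh ((min_le_right _ _).trans (min_le_right _ _)))
        calc C₁ * ‖h‖ ≤ C₁ * (dqm / (C₁ + 1)) :=
              mul_le_mul_of_nonneg_left h1 hC₁
          _ ≤ dqm := by
              rw [div_eq_inv_mul, ← mul_assoc]
              rw [show C₁ * (C₁ + 1)⁻¹ * dqm = (C₁ / (C₁ + 1)) * dqm from by ring]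
              have : C₁ / (C₁ + 1) ≤ 1 := by
                rw [div_le_one (by linarith)]; linarith
              calc (C₁ / (C₁+1)) * dqm ≤ 1 * dqm :=
                    mul_le_mul_of_nonneg_right this hdqm_pos.le
                _ = dqm := one_mul _
      have : ∀ i : Fin N, ‖G i (Y' s) - G i (Y s) - fderiv ℝ (G i) (Y s) (Y' s - Y s)‖
          ≤ εq * (C₁ * ‖h‖) := by
        intro i
        refine (hquad i (Y s) (Y' s) (hsmall.trans (hdqm_le i))).trans ?_
        exact mul_le_mul_of_nonneg_left (hYY' s) hεq.le
      refine (aks_sum_bound x _ _ (by positivity) this).trans ?_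
      apply mul_le_mul_of_nonneg_right _ (by positivity)
      exact mul_le_mul_of_nonneg_left hx.le (Nat.cast_nonneg N)
    have bd2 : ‖∑ i, x i • (fderiv ℝ (G i) (Y s)) (Y' s - Y s - s • ∑ j, h j • G j (Y s))‖
        ≤ 1/2 * ‖R‖ := by
      have hRs : Y' s - Y s - s • ∑ j, h j • G j (Y s)
          = R (projIcc (0:ℝ) 1 zero_le_one s) := by
        have hc' : ((projIcc (0:ℝ) 1 zero_le_one s : Icc (0:ℝ) 1) : ℝ) = s := by
          rw [projIcc_of_mem zero_le_one hs]
        have hYapp : Sol (projIcc (0:ℝ) 1 zero_le_one s) = Y s := rfl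
        have : R (projIcc (0:ℝ) 1 zero_le_one s)
            = Y' s - Y s - ((projIcc (0:ℝ) 1 zero_le_one s : Icc (0:ℝ) 1) : ℝ)
                • ∑ j, h j • G j (Y s) := by
          rw [hR]
          simp only [ContinuousMap.sub_apply]
          rw [hwC]
          rfl
        rw [this, hc']
      rw [Finset.sum_congr rfl (fun i _ => by rw [hRs])]
      have hRnorm : ‖R (projIcc (0:ℝ) 1 zero_le_one s)‖ ≤ ‖R‖ :=
        ContinuousMap.norm_coe_le_norm R _
      have : ∀ i : Fin N, ‖(fderiv ℝ (G i) (Y s)) (R (projIcc (0:ℝ) 1 zero_le_one s))‖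
          ≤ Λ * ‖R‖ := by
        intro i
        refine ((fderiv ℝ (G i) (Y s)).le_opNorm _).trans ?_
        exact mul_le_mul (hDGB i _) hRnorm (norm_nonneg _) hΛ
      refine (aks_sum_bound x _ _ (by positivity) this).trans ?_
      calc (N:ℝ) * ‖x‖ * (Λ * ‖R‖) ≤ (N:ℝ) * δ * Λ * ‖R‖ := by
            rw [show (N:ℝ) * ‖x‖ * (Λ * ‖R‖) = ((N:ℝ) * ‖x‖ * Λ) * ‖R‖ from by ring]
            apply mul_le_mul_of_nonneg_right _ (norm_nonneg _)
            apply mul_le_mul_of_nonneg_right _ hΛ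
            exact mul_le_mul_of_nonneg_left hx.le (Nat.cast_nonneg N)
        _ ≤ 1/2 * ‖R‖ := mul_le_mul_of_nonneg_right hδΛ (norm_nonneg _)
    have bd3 : ‖∑ i, h i • (G i (Y' s) - G i (Y s))‖ ≤ (N:ℝ) * ‖h‖ * (Λ * (C₁ * ‖h‖)) := by
      have : ∀ i : Fin N, ‖G i (Y' s) - G i (Y s)‖ ≤ Λ * (C₁ * ‖h‖) := by
        intro i
        have hl := (hLip i).dist_le_mul (Y' s) (Y s)
        rw [dist_eq_norm, dist_eq_norm, Real.coe_toNNReal _ hΛ] at hl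
        exact hl.trans (mul_le_mul_of_nonneg_left (hYY' s) hΛ)
      exact aks_sum_bound h _ _ (by positivity) this
    calc ‖(∑ i, x i • (G i (Y' s) - G i (Y s) - fderiv ℝ (G i) (Y s) (Y' s - Y s)))
          + (∑ i, x i • (fderiv ℝ (G i) (Y s)) (Y' s - Y s - s • ∑ j, h j • G j (Y s)))
          + ∑ i, h i • (G i (Y' s) - G i (Y s))‖
        ≤ ‖(∑ i, x i • (G i (Y' s) - G i (Y s) - fderiv ℝ (G i) (Y s) (Y' s - Y s)))
          + (∑ i, x i • (fderiv ℝ (G i) (Y s)) (Y' s - Y s - s • ∑ j, h j • G j (Y s)))‖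
          + ‖∑ i, h i • (G i (Y' s) - G i (Y s))‖ := norm_add_le _ _
      _ ≤ ‖(∑ i, x i • (G i (Y' s) - G i (Y s) - fderiv ℝ (G i) (Y s) (Y' s - Y s)))‖
          + ‖(∑ i, x i • (fderiv ℝ (G i) (Y s)) (Y' s - Y s - s • ∑ j, h j • G j (Y s)))‖
          + ‖∑ i, h i • (G i (Y' s) - G i (Y s))‖ := by
            have := norm_add_le (∑ i, x i • (G i (Y' s) - G i (Y s)
              - fderiv ℝ (G i) (Y s) (Y' s - Y s)))
              (∑ i, x i • (fderiv ℝ (G i) (Y s)) (Y' s - Y s - s • ∑ j, h j • G j (Y s)))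
            linarith
      _ ≤ (N:ℝ) * δ * (εq * (C₁ * ‖h‖)) + (N:ℝ) * ‖h‖ * (Λ * (C₁ * ‖h‖)) + 1/2 * ‖R‖ := by
            linarith
  -- sup bound on R
  set Q : ℝ := (N:ℝ) * δ * (εq * (C₁ * ‖h‖)) + (N:ℝ) * ‖h‖ * (Λ * (C₁ * ‖h‖)) with hQ
  have hQ0 : 0 ≤ Q := by positivity
  have hRbound : ‖R‖ ≤ 2 * Q := by
    have hRle : ∀ t : Icc (0:ℝ) 1, ‖R t‖ ≤ Q + 1/2 * ‖R‖ := by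
      intro t
      rw [hRint t]
      have hb : ∀ s ∈ Set.uIoc (0:ℝ) (t:ℝ), ‖i1 s - i2 s - i3 s‖ ≤ Q + 1/2 * ‖R‖ := by
        intro s hs
        rw [Set.uIoc_of_le t.2.1] at hs
        exact hptbd s ⟨hs.1.le, hs.2.trans t.2.2⟩
      refine (intervalIntegral.norm_integral_le_of_norm_le_const hb).trans ?_
      have ht : |(t:ℝ) - 0| ≤ 1 := by
        rw [sub_zero, abs_of_nonneg t.2.1]; exact t.2.2
      have hC : (0:ℝ) ≤ Q + 1/2 * ‖R‖ := by positivity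
      calc (Q + 1/2 * ‖R‖) * |(t:ℝ) - 0| ≤ (Q + 1/2 * ‖R‖) * 1 :=
            mul_le_mul_of_nonneg_left ht hC
        _ = Q + 1/2 * ‖R‖ := mul_one _
    have : ‖R‖ ≤ Q + 1/2 * ‖R‖ := by
      refine (ContinuousMap.norm_le _ (by positivity)).2 ?_
      exact hRle
    linarith
  -- conclude
  have hfinal : ‖aksSol G hGc ξ₀ (x + h) aksOne - aksSol G hGc ξ₀ x aksOne
      - (∑ j, (ContinuousLinearMap.proj (R := ℝ) (φ := fun _ : Fin N => ℝ) j).smulRight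
        (G j (aksSol G hGc ξ₀ x aksOne))) h‖
      ≤ 2 * Q := by
    have happ : (∑ j, (ContinuousLinearMap.proj (R := ℝ) (φ := fun _ : Fin N => ℝ) j).smulRight
        (G j (aksSol G hGc ξ₀ x aksOne))) h = ∑ j, h j • G j (Sol aksOne) := by
      rw [ContinuousLinearMap.sum_apply]
      refine Finset.sum_congr rfl fun j _ => ?_
      simp [hSol]
    have hwC1 : wC aksOne = ∑ j, h j • G j (Sol aksOne) := by
      have : wC aksOne = ((aksOne : Icc (0:ℝ) 1) : ℝ) • ∑ j, h j • G j (Sol aksOne) := rfl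
      rw [this]
      norm_num [aksOne]
    have hRone : aksSol G hGc ξ₀ (x + h) aksOne - aksSol G hGc ξ₀ x aksOne
        - (∑ j, (ContinuousLinearMap.proj (R := ℝ) (φ := fun _ : Fin N => ℝ) j).smulRight
          (G j (aksSol G hGc ξ₀ x aksOne))) h
        = R aksOne := by
      rw [happ, ← hwC1, hR]
      simp [ContinuousMap.sub_apply, hSol, hSol']
    rw [hRone]
    exact (ContinuousMap.norm_coe_le_norm R _).trans hRbound
  refine hfinal.trans ?_
  -- 2Q ≤ ε' ‖h‖
  have hterm1 : 2 * ((N:ℝ) * δ * (εq * (C₁ * ‖h‖))) ≤ ε'/2 * ‖h‖ := by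
    rw [hεqdef]
    rw [show 2 * ((N:ℝ) * δ * (ε' / (4 * ((N:ℝ) * δ * C₁) + 4) * (C₁ * ‖h‖)))
      = (2 * ((N:ℝ) * δ * C₁) / (4 * ((N:ℝ) * δ * C₁) + 4)) * ε' * ‖h‖ from by ring]
    apply mul_le_mul_of_nonneg_right _ (norm_nonneg h)
    rw [show ε'/2 = (1/2) * ε' from by ring]
    apply mul_le_mul_of_nonneg_right _ hε'.le
    rw [div_le_iff₀ (by positivity)]
    have h1 : 0 ≤ (N:ℝ) * δ * C₁ := by positivity
    linarith
  have hterm2 : 2 * ((N:ℝ) * ‖h‖ * (Λ * (C₁ * ‖h‖))) ≤ ε'/2 * ‖h‖ := by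
    have hsmall : ‖h‖ ≤ ε' / (4 * (N:ℝ) * Λ * C₁ + 1) :=
      le_of_lt (lt_of_lt_of_le hh ((min_le_right _ _).trans (min_le_left _ _)))
    have key : 2 * ((N:ℝ) * Λ * C₁) * ‖h‖ ≤ ε'/2 := by
      have h2 : 2 * ((N:ℝ) * Λ * C₁) * ‖h‖
          ≤ 2 * ((N:ℝ) * Λ * C₁) * (ε' / (4 * (N:ℝ) * Λ * C₁ + 1)) := by
        apply mul_le_mul_of_nonneg_left hsmall (by positivity)
      refine h2.trans ?_
      rw [show 2 * ((N:ℝ) * Λ * C₁) * (ε' / (4 * (N:ℝ) * Λ * C₁ + 1))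
        = (2 * ((N:ℝ) * Λ * C₁) / (4 * (N:ℝ) * Λ * C₁ + 1)) * ε' from by ring]
      rw [show ε'/2 = (1/2) * ε' from by ring]
      apply mul_le_mul_of_nonneg_right _ hε'.le
      rw [div_le_iff₀ (by positivity)]
      have h1 : 0 ≤ (N:ℝ) * Λ * C₁ := by positivity
      linarith
    calc 2 * ((N:ℝ) * ‖h‖ * (Λ * (C₁ * ‖h‖))) = (2 * ((N:ℝ) * Λ * C₁) * ‖h‖) * ‖h‖ := by ring
      _ ≤ ε'/2 * ‖h‖ := mul_le_mul_of_nonneg_right key (norm_nonneg h)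
  calc 2 * Q = 2 * ((N:ℝ) * δ * (εq * (C₁ * ‖h‖))) + 2 * ((N:ℝ) * ‖h‖ * (Λ * (C₁ * ‖h‖))) := by
        rw [hQ]; ring
    _ ≤ ε'/2 * ‖h‖ + ε'/2 * ‖h‖ := add_le_add hterm1 hterm2
    _ = ε' * ‖h‖ := by ring
end Main

noncomputable section Exists
open intervalIntegral Set Filter
open scoped NNReal Topology
variable {L : Type*} [NormedAddCommGroup L] [NormedSpace ℝ L] [FiniteDimensional ℝ L]
variable {N : ℕ}
variable (G : Fin N → L → L) (hGc : ∀ i, Continuous (G i)) (ξ₀ : L)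
include hGc

theorem aks_exists (hN : 0 < N) (hG1 : ∀ i, ContDiff ℝ 1 (G i))
    (B Λ : ℝ) (hB : 0 ≤ B) (hΛ : 0 ≤ Λ)
    (hGB : ∀ i y, ‖G i y‖ ≤ B) (hDGB : ∀ i y, ‖fderiv ℝ (G i) y‖ ≤ Λ)
    (hUC : ∀ i, UniformContinuous fun y => fderiv ℝ (G i) y)
    (K : Submodule ℝ L) (πK : L →L[ℝ] L) (hπK : ∀ y : L, πK y = y ↔ y ∈ K)
    (hGK : ∀ i, ∀ y ∈ K, G i y ∈ K) (hξ₀ : ξ₀ ∈ K)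
    (δ : ℝ) (hδ : 0 < δ) (hδΛ : (N:ℝ) * δ * Λ ≤ 1/2)
    (hsym : ∀ y ∈ K, ‖y - ξ₀‖ ≤ (N:ℝ) * δ * B → ∀ i j,
      fderiv ℝ (G i) y (G j y) = fderiv ℝ (G j) y (G i y)) :
    ∃ ξf : (Fin N → ℝ) → L,
      ContDiffOn ℝ 1 ξf (Metric.ball 0 δ) ∧
      (∀ x ∈ Metric.ball (0 : Fin N → ℝ) δ, ξf x ∈ K ∧ ‖ξf x - ξ₀‖ ≤ (N:ℝ) * δ * B) ∧
      ξf 0 = ξ₀ ∧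
      ∀ x ∈ Metric.ball (0 : Fin N → ℝ) δ, ∀ i, fderiv ℝ ξf x (Pi.single i 1) = G i (ξf x) := by
  have hLip : ∀ i, LipschitzWith Λ.toNNReal (G i) :=
    fun i => aks_lipschitzWith (hG1 i) hΛ (hDGB i)
  have hcof : ∀ y : Fin N → ℝ, ‖y‖ < δ → ContractingWith (1/2 : ℝ≥0) (aksT G hGc ξ₀ y) := by
    intro y hy
    refine aks_contraction G hGc ξ₀ Λ hΛ hLip y ?_
    calc (N:ℝ) * ‖y‖ * Λ ≤ (N:ℝ) * δ * Λ := by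
          apply mul_le_mul_of_nonneg_right _ hΛ
          exact mul_le_mul_of_nonneg_left hy.le (Nat.cast_nonneg N)
      _ ≤ 1/2 := hδΛ
  set ξf : (Fin N → ℝ) → L := fun y => aksSol G hGc ξ₀ y aksOne with hξf
  have hball : ∀ x ∈ Metric.ball (0 : Fin N → ℝ) δ, ‖x‖ < δ := by
    intro x hx; rwa [Metric.mem_ball, dist_zero_right] at hx
  -- differentiability on the ball
  have hFD : ∀ x ∈ Metric.ball (0 : Fin N → ℝ) δ, HasFDerivAt ξf
      (∑ j, (ContinuousLinearMap.proj (R := ℝ) (φ := fun _ : Fin N => ℝ) j).smulRight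
        (G j (ξf x))) x := by
    intro x hx
    exact aksSol_hasFDerivAt G hGc ξ₀ hN hG1 B Λ hB hΛ hGB hDGB hUC K πK hπK hGK hξ₀
      δ hδ hδΛ hsym x (hball x hx)
  -- continuity of ξf on the ball
  have hcont : ContinuousOn ξf (Metric.ball 0 δ) := by
    intro x hx
    exact ((hFD x hx).differentiableAt.continuousAt).continuousWithinAt
  refine ⟨ξf, ?_, ?_, ?_, ?_⟩
  · -- C¹
    have h1 : (1 : WithTop ℕ∞) = 0 + 1 := by norm_num
    rw [h1, contDiffOn_succ_iff_fderiv_of_isOpen Metric.isOpen_ball]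
    refine ⟨fun x hx => ((hFD x hx).differentiableAt).differentiableWithinAt, ?_, ?_⟩
    · intro h0
      simp at h0
    · rw [contDiffOn_zero]
      have heq : ∀ x ∈ Metric.ball (0 : Fin N → ℝ) δ, fderiv ℝ ξf x
          = ∑ j, (ContinuousLinearMap.proj (R := ℝ) (φ := fun _ : Fin N => ℝ) j).smulRight
            (G j (ξf x)) := fun x hx => (hFD x hx).fderiv
    -- continuity of the candidate derivative
      have hcand : ContinuousOn (fun x => ∑ j,
          (ContinuousLinearMap.proj (R := ℝ) (φ := fun _ : Fin N => ℝ) j).smulRight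
            (G j (ξf x))) (Metric.ball 0 δ) := by
        refine continuousOn_finset_sum _ fun j _ => ?_
        have hGone : ContinuousOn (fun x => G j (ξf x)) (Metric.ball 0 δ) :=
          (hGc j).comp_continuousOn hcont
        have : Continuous fun v : L =>
            (ContinuousLinearMap.proj (R := ℝ) (φ := fun _ : Fin N => ℝ) j).smulRight v := by
          have := (ContinuousLinearMap.smulRightL ℝ (Fin N → ℝ) L
            (ContinuousLinearMap.proj (R := ℝ) (φ := fun _ : Fin N => ℝ) j)).continuous
          exact this
        exact this.comp_continuousOn hGone
      exact ContinuousOn.congr hcand heq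
  · -- membership and distance
    intro x hx
    constructor
    · exact aksSol_mem G hGc ξ₀ K πK hπK hGK hξ₀ (hcof x (hball x hx)) _
    · refine (aksSol_dist_center G hGc ξ₀ B hB hGB (hcof x (hball x hx)) _).trans ?_
      apply mul_le_mul_of_nonneg_right _ hB
      exact mul_le_mul_of_nonneg_left (hball x hx).le (Nat.cast_nonneg N)
  · -- initial value
    rw [hξf]
    show aksSol G hGc ξ₀ 0 aksOne = ξ₀
    rw [aksSol_zero]
    rfl
  · -- the PDE
    intro x hx i
    rw [(hFD x hx).fderiv]
    rw [ContinuousLinearMap.sum_apply]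
    have : ∀ j : Fin N,
        (ContinuousLinearMap.proj (R := ℝ) (φ := fun _ : Fin N => ℝ) j).smulRight
          (G j (ξf x)) (Pi.single i 1)
        = (Pi.single (M := fun _ : Fin N => ℝ) i 1 j) • G j (ξf x) := by
      intro j
      simp [ContinuousLinearMap.smulRight_apply]
    rw [Finset.sum_congr rfl fun j _ => this j]
    rw [Finset.sum_eq_single i]
    · simp
    · intro j _ hji
      rw [Pi.single_eq_of_ne hji, zero_smul]
    · intro hi
      exact absurd (Finset.mem_univ i) hi

/-- local uniqueness via the contraction, for any two solutions of the PDE -/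
theorem aks_unique (Λ : ℝ) (hΛ : 0 ≤ Λ) (hLip : ∀ i, LipschitzWith Λ.toNNReal (G i))
    (δ : ℝ) (hδ : 0 < δ) (hδΛ : (N:ℝ) * δ * Λ ≤ 1/2)
    (ξ₁ ξ₂ : (Fin N → ℝ) → L) (r : ℝ) (hr : 0 < r)
    (h10 : ξ₁ 0 = ξ₀) (h20 : ξ₂ 0 = ξ₀)
    (hd1 : ∀ x ∈ Metric.ball (0 : Fin N → ℝ) r, DifferentiableAt ℝ ξ₁ x)
    (hd2 : ∀ x ∈ Metric.ball (0 : Fin N → ℝ) r, DifferentiableAt ℝ ξ₂ x)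
    (hp1 : ∀ x ∈ Metric.ball (0 : Fin N → ℝ) r, ∀ i,
      fderiv ℝ ξ₁ x (Pi.single i 1) = G i (ξ₁ x))
    (hp2 : ∀ x ∈ Metric.ball (0 : Fin N → ℝ) r, ∀ i,
      fderiv ℝ ξ₂ x (Pi.single i 1) = G i (ξ₂ x)) :
    Set.EqOn ξ₁ ξ₂ (Metric.ball 0 (min δ r)) := by
  intro x hx
  rw [Metric.mem_ball, dist_zero_right] at hx
  have hxδ : ‖x‖ < δ := lt_of_lt_of_le hx (min_le_left _ _)
  have hxr : ‖x‖ < r := lt_of_lt_of_le hx (min_le_right _ _)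
  have hc : ContractingWith (1/2 : ℝ≥0) (aksT G hGc ξ₀ x) := by
    refine aks_contraction G hGc ξ₀ Λ hΛ hLip x ?_
    calc (N:ℝ) * ‖x‖ * Λ ≤ (N:ℝ) * δ * Λ := by
          apply mul_le_mul_of_nonneg_right _ hΛ
          exact mul_le_mul_of_nonneg_left hxδ.le (Nat.cast_nonneg N)
      _ ≤ 1/2 := hδΛ
  -- the scaled curves
  have hmem : ∀ s : ℝ, s ∈ Icc (0:ℝ) 1 → s • x ∈ Metric.ball (0 : Fin N → ℝ) r := by
    intro s hs
    rw [Metric.mem_ball, dist_zero_right, norm_smul]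
    calc ‖s‖ * ‖x‖ ≤ 1 * ‖x‖ := by
          apply mul_le_mul_of_nonneg_right _ (norm_nonneg x)
          rw [Real.norm_eq_abs, abs_of_nonneg hs.1]
          exact hs.2
      _ = ‖x‖ := one_mul _
      _ < r := hxr
  have key : ∀ (ξk : (Fin N → ℝ) → L),
      ξk 0 = ξ₀ →
      (∀ y ∈ Metric.ball (0 : Fin N → ℝ) r, DifferentiableAt ℝ ξk y) →
      (∀ y ∈ Metric.ball (0 : Fin N → ℝ) r, ∀ i,
        fderiv ℝ ξk y (Pi.single i 1) = G i (ξk y)) →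
      ∃ γ : C(Icc (0:ℝ) 1, L), Function.IsFixedPt (aksT G hGc ξ₀ x) γ ∧
        γ aksOne = ξk x := by
    intro ξk hk0 hkd hkp
    have hcurvecont : Continuous fun t : Icc (0:ℝ) 1 => ξk ((t : ℝ) • x) := by
      have hcontOn : ContinuousOn ξk (Metric.ball 0 r) := fun y hy =>
        ((hkd y hy).continuousAt).continuousWithinAt
      refine hcontOn.comp_continuous ?_ ?_
      · exact (continuous_subtype_val.smul continuous_const)
      · intro t; exact hmem _ t.2
    refine ⟨⟨fun t => ξk ((t : ℝ) • x), hcurvecont⟩, ?_, ?_⟩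
    · -- fixed point property
      ext t
      show ξ₀ + ∫ s in (0:ℝ)..(t:ℝ), ∑ i, x i •
          G i (ξk (((projIcc (0:ℝ) 1 zero_le_one s : Icc (0:ℝ) 1) : ℝ) • x))
        = ξk ((t:ℝ) • x)
      have hderiv : ∀ s ∈ uIcc (0:ℝ) (t:ℝ), HasDerivAt (fun u : ℝ => ξk (u • x))
          (∑ i, x i • G i (ξk (((projIcc (0:ℝ) 1 zero_le_one s : Icc (0:ℝ) 1) : ℝ) • x))) s := by
        intro s hs
        rw [uIcc_of_le t.2.1] at hs
        have hs1 : s ∈ Icc (0:ℝ) 1 := ⟨hs.1, hs.2.trans t.2.2⟩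
        have hproj : ((projIcc (0:ℝ) 1 zero_le_one s : Icc (0:ℝ) 1) : ℝ) = s := by
          rw [projIcc_of_mem zero_le_one hs1]
        rw [hproj]
        have hsx : s • x ∈ Metric.ball (0 : Fin N → ℝ) r := hmem s hs1
        have hcurve : HasDerivAt (fun u : ℝ => u • x) x s := by
          have := (hasDerivAt_id s).smul_const x
          rwa [one_smul] at this
        have hcomp := ((hkd _ hsx).hasFDerivAt).comp_hasDerivAt s hcurve
        have happ : fderiv ℝ ξk (s • x) x = ∑ i, x i • G i (ξk (s • x)) := by
          have e1 : fderiv ℝ ξk (s • x) x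
              = fderiv ℝ ξk (s • x) (∑ i, Pi.single i (x i)) := by
            rw [Finset.univ_sum_single]
          rw [e1, map_sum]
          refine Finset.sum_congr rfl fun i _ => ?_
          have hsingle : Pi.single i (x i) = x i • Pi.single (M := fun _ : Fin N => ℝ) i 1 := by
            rw [← Pi.single_smul, smul_eq_mul, mul_one]
          rw [hsingle, map_smul, hkp _ hsx i]
        rwa [happ] at hcomp
      have hint : IntervalIntegrable (fun s => ∑ i, x i •
          G i (ξk (((projIcc (0:ℝ) 1 zero_le_one s : Icc (0:ℝ) 1) : ℝ) • x)))
          MeasureTheory.volume 0 (t:ℝ) := by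
        refine Continuous.intervalIntegrable ?_ _ _
        refine continuous_finset_sum _ fun i _ => Continuous.const_smul ?_ _
        refine (hGc i).comp ?_
        have hcont2 : Continuous fun s : ℝ =>
            ((projIcc (0:ℝ) 1 zero_le_one s : Icc (0:ℝ) 1) : ℝ) • x :=
          (continuous_subtype_val.comp continuous_projIcc).smul continuous_const
        have hcOn : ContinuousOn ξk (Metric.ball 0 r) := fun y hy =>
          ((hkd y hy).continuousAt).continuousWithinAt
        refine hcOn.comp_continuous hcont2 ?_
        intro s
        exact hmem _ (projIcc (0:ℝ) 1 zero_le_one s).2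
      have hftc := intervalIntegral.integral_eq_sub_of_hasDerivAt hderiv hint
      rw [hftc]
      rw [zero_smul, hk0]
      abel
    · show ξk (((aksOne : Icc (0:ℝ) 1) : ℝ) • x) = ξk x
      norm_num [aksOne]
  obtain ⟨γ₁, hγ₁, hγ₁x⟩ := key ξ₁ h10 hd1 hp1
  obtain ⟨γ₂, hγ₂, hγ₂x⟩ := key ξ₂ h20 hd2 hp2
  have := hc.fixedPoint_unique' hγ₁ hγ₂
  rw [← hγ₁x, ← hγ₂x, this]
end Exists

noncomputable section Helpers
open Filter
variable {L : Type*} [NormedAddCommGroup L] [NormedSpace ℝ L] [FiniteDimensional ℝ L]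

theorem aks_UC {E : Type*} [NormedAddCommGroup E] {g : L → E} (hg : Continuous g)
    (hs : HasCompactSupport g) : UniformContinuous g := by
  refine hg.uniformContinuous_of_tendsto_cocompact (x := 0) ?_
  have hev : ∀ᶠ y in Filter.cocompact L, g y = 0 :=
    Filter.mem_cocompact.2 ⟨tsupport g, hs, fun y hy => image_eq_zero_of_notMem_tsupport hy⟩
  refine Filter.Tendsto.congr' ?_ tendsto_const_nhds
  filter_upwards [hev] with y hy using hy.symm

theorem aks_bound {E : Type*} [NormedAddCommGroup E] {g : L → E} (hg : Continuous g)
    (hs : HasCompactSupport g) : ∃ C, 0 ≤ C ∧ ∀ y, ‖g y‖ ≤ C := by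
  obtain ⟨C, hC⟩ := hg.bounded_above_of_compact_support hs
  exact ⟨C, (norm_nonneg _).trans (hC 0), hC⟩
end Helpers

set_option maxHeartbeats 2000000 in
/-- Lemma 4.4 (modified AKS integration): given pointwise-commuting, continuously
differentiable ad-equivariant vector fields `V₁,…,V_N` on `𝒢 = 𝒫 ⊕ 𝒜 ⊕ ℳ` satisfying
`π_𝒜[π_𝒫V_i(ξ), π_𝒫V_j(ξ)] = 0` on `𝒦 = 𝒜 ⊕ 𝒫`, the Lax system
`∂ξ/∂x^i = [ξ, π_𝒫V_i(ξ)]` has a unique local solution in `𝒦` for every initial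
condition `ξ₀ ∈ 𝒦`, and for any solution the 1-form `Ã = Σ π_𝒫V_i(ξ) dx^i` satisfies
the Maurer–Cartan equation. -/
theorem stmt_10 {L : Type*} [NormedAddCommGroup L] [NormedSpace ℝ L]
    [FiniteDimensional ℝ L] {N : ℕ} (hN : 1 ≤ N)
    (br : L →ₗ[ℝ] L →ₗ[ℝ] L)
    (hanti : ∀ x y : L, br x y = -br y x)
    (hjac : ∀ x y z : L, br x (br y z) = br (br x y) z + br y (br x z))
    (P A M : Submodule ℝ L)
    (πP πA πM : L →ₗ[ℝ] L)
    (hPmem : ∀ x, πP x ∈ P) (hAmem : ∀ x, πA x ∈ A) (hMmem : ∀ x, πM x ∈ M)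
    (hsum : ∀ x, πP x + πA x + πM x = x)
    (hPid : ∀ x ∈ P, πP x = x) (hPA : ∀ x ∈ A, πP x = 0) (hPM : ∀ x ∈ M, πP x = 0)
    (hAid : ∀ x ∈ A, πA x = x) (hAP : ∀ x ∈ P, πA x = 0) (hAM : ∀ x ∈ M, πA x = 0)
    (hMid : ∀ x ∈ M, πM x = x) (hMP : ∀ x ∈ P, πM x = 0) (hMA : ∀ x ∈ A, πM x = 0)
    (hAsub : ∀ x ∈ A, ∀ y ∈ A, br x y ∈ A)
    (hKsub : ∀ x ∈ A ⊔ P, ∀ y ∈ A ⊔ P, br x y ∈ A ⊔ P)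
    (hBsub : ∀ x ∈ A ⊔ M, ∀ y ∈ A ⊔ M, br x y ∈ A ⊔ M)
    (hAPbr : ∀ x ∈ A, ∀ y ∈ P, br x y ∈ P)
    (hAMbr : ∀ x ∈ A, ∀ y ∈ M, br x y ∈ M)
    (V : Fin N → L → L) (hV : ∀ i, ContDiff ℝ 1 (V i))
    (hVad : ∀ i, ∀ ξ η : L, fderiv ℝ (V i) ξ (br ξ η) = br (V i ξ) η)
    (hcomm : ∀ i j, ∀ ζ : L, br (V i ζ) (V j ζ) = 0)
    (hA0 : ∀ i j, ∀ ξ ∈ (A ⊔ P : Submodule ℝ L),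
      πA (br (πP (V i ξ)) (πP (V j ξ))) = 0) :
    (∀ ξ₀ ∈ (A ⊔ P : Submodule ℝ L),
      ∃ (U : Set (Fin N → ℝ)) (ξ : (Fin N → ℝ) → L),
        IsLaxSol br πP (A ⊔ P) V ξ₀ U ξ) ∧
    (∀ ξ₀ ∈ (A ⊔ P : Submodule ℝ L),
      ∀ (U₁ : Set (Fin N → ℝ)) (ξ₁ : (Fin N → ℝ) → L)
        (U₂ : Set (Fin N → ℝ)) (ξ₂ : (Fin N → ℝ) → L),
        IsLaxSol br πP (A ⊔ P) V ξ₀ U₁ ξ₁ → IsLaxSol br πP (A ⊔ P) V ξ₀ U₂ ξ₂ →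
        ∃ W : Set (Fin N → ℝ), IsOpen W ∧ (0 : Fin N → ℝ) ∈ W ∧ Set.EqOn ξ₁ ξ₂ W) ∧
    (∀ ξ₀ ∈ (A ⊔ P : Submodule ℝ L),
      ∀ (U : Set (Fin N → ℝ)) (ξ : (Fin N → ℝ) → L),
        IsLaxSol br πP (A ⊔ P) V ξ₀ U ξ →
        ∀ x ∈ U, ∀ i j : Fin N,
          fderiv ℝ (fun y => πP (V j (ξ y))) x (Pi.single i 1)
            - fderiv ℝ (fun y => πP (V i (ξ y))) x (Pi.single j 1)
            + br (πP (V i (ξ x))) (πP (V j (ξ x))) = 0) := by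
  have hNpos : 0 < N := hN
  have hNR : (0:ℝ) < N := by exact_mod_cast hNpos
  -- the projection onto 𝒦 as a continuous linear map
  set πK : L →L[ℝ] L := LinearMap.toContinuousLinearMap (πP + πA) with hπKdef
  have hπK : ∀ y : L, πK y = y ↔ y ∈ A ⊔ P := by
    intro y
    have happ : πK y = πP y + πA y := by
      rw [hπKdef]; simp
    rw [happ]
    constructor
    · intro h
      rw [← h]
      exact Submodule.add_mem _ (Submodule.mem_sup_right (hPmem y))
        (Submodule.mem_sup_left (hAmem y))
    · intro h
      obtain ⟨a, ha, p, hp, rfl⟩ := Submodule.mem_sup.1 h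
      rw [map_add, map_add, hPA a ha, hPid p hp, hAid a ha, hAP p hp]
      abel
  refine ⟨?_, ?_, ?_⟩
  · -- EXISTENCE
    intro ξ₀ hξ₀
    set b : ContDiffBump ξ₀ := ⟨1, 2, one_pos, one_lt_two⟩ with hb
    set G : Fin N → L → L := fun i y => b y • br y (πP (V i y)) with hG
    have hG1 : ∀ i, ContDiff ℝ 1 (G i) := fun i =>
      (b.contDiff (n := 1)).smul (aks_contDiff_F br πP V hV i)
    have hGc : ∀ i, Continuous (G i) := fun i => (hG1 i).continuous
    have hGsupp : ∀ i, HasCompactSupport (G i) := fun i => b.hasCompactSupport.smul_right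
    have hGF : ∀ i, ∀ y : L, ‖y - ξ₀‖ ≤ 1 → G i y = br y (πP (V i y)) := by
      intro i y hy
      have h1 : b y = 1 := b.one_of_mem_closedBall
        (by rwa [Metric.mem_closedBall, dist_eq_norm])
      show b y • br y (πP (V i y)) = br y (πP (V i y))
      rw [h1, one_smul]
    have hDGF : ∀ i, ∀ y : L, ‖y - ξ₀‖ < 1 →
        fderiv ℝ (G i) y = fderiv ℝ (fun z => br z (πP (V i z))) y := by
      intro i y hy
      refine Filter.EventuallyEq.fderiv_eq ?_
      have hball : Metric.ball ξ₀ 1 ∈ nhds y :=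
        Metric.isOpen_ball.mem_nhds (by rwa [Metric.mem_ball, dist_eq_norm])
      filter_upwards [hball] with z hz
      exact hGF i z (le_of_lt (by rwa [Metric.mem_ball, dist_eq_norm] at hz))
    have hBex : ∀ i, ∃ C, 0 ≤ C ∧ ∀ y, ‖G i y‖ ≤ C := fun i => aks_bound (hGc i) (hGsupp i)
    choose B0 hB00 hB0 using hBex
    set B : ℝ := ∑ i, B0 i with hBdef
    have hB : 0 ≤ B := Finset.sum_nonneg fun i _ => hB00 i
    have hGB : ∀ i y, ‖G i y‖ ≤ B := fun i y =>
      (hB0 i y).trans (Finset.single_le_sum (fun j _ => hB00 j) (Finset.mem_univ i))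
    have hΛex : ∀ i, ∃ C, 0 ≤ C ∧ ∀ y, ‖fderiv ℝ (G i) y‖ ≤ C := fun i =>
      aks_bound ((hG1 i).continuous_fderiv one_ne_zero) ((hGsupp i).fderiv (𝕜 := ℝ))
    choose Λ0 hΛ00 hΛ0 using hΛex
    set Λ : ℝ := ∑ i, Λ0 i with hΛdef
    have hΛ : 0 ≤ Λ := Finset.sum_nonneg fun i _ => hΛ00 i
    have hDGB : ∀ i y, ‖fderiv ℝ (G i) y‖ ≤ Λ := fun i y =>
      (hΛ0 i y).trans (Finset.single_le_sum (fun j _ => hΛ00 j) (Finset.mem_univ i))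
    have hUC : ∀ i, UniformContinuous fun y => fderiv ℝ (G i) y := fun i =>
      aks_UC ((hG1 i).continuous_fderiv one_ne_zero) ((hGsupp i).fderiv (𝕜 := ℝ))
    set δ : ℝ := min ((2*(N:ℝ)*(Λ+1))⁻¹) (1/(2*(N:ℝ)*(B+1))) with hδdef
    have hδ : 0 < δ := lt_min (by positivity) (by positivity)
    have hδΛ : (N:ℝ) * δ * Λ ≤ 1/2 := by
      have h1 : δ ≤ (2*(N:ℝ)*(Λ+1))⁻¹ := min_le_left _ _
      have h2 : (N:ℝ) * δ * Λ ≤ (N:ℝ) * (2*(N:ℝ)*(Λ+1))⁻¹ * Λ :=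
        mul_le_mul_of_nonneg_right (mul_le_mul_of_nonneg_left h1 hNR.le) hΛ
      refine h2.trans ?_
      have h3 : (N:ℝ) * (2*(N:ℝ)*(Λ+1))⁻¹ * Λ = ((N:ℝ)*Λ)/(2*(N:ℝ)*(Λ+1)) := by ring
      rw [h3, div_le_iff₀ (by positivity)]
      nlinarith [hNR, hΛ]
    have hδB : (N:ℝ) * δ * B ≤ 1/2 := by
      have h1 : δ ≤ 1/(2*(N:ℝ)*(B+1)) := min_le_right _ _
      have h2 : (N:ℝ) * δ * B ≤ (N:ℝ) * (1/(2*(N:ℝ)*(B+1))) * B :=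
        mul_le_mul_of_nonneg_right (mul_le_mul_of_nonneg_left h1 hNR.le) hB
      refine h2.trans ?_
      have h3 : (N:ℝ) * (1/(2*(N:ℝ)*(B+1))) * B = ((N:ℝ)*B)/(2*(N:ℝ)*(B+1)) := by ring
      rw [h3, div_le_iff₀ (by positivity)]
      nlinarith [hNR, hB]
    have hGK : ∀ i, ∀ y ∈ (A ⊔ P : Submodule ℝ L), G i y ∈ A ⊔ P := fun i y hy =>
      Submodule.smul_mem _ _ (hKsub y hy _ (Submodule.mem_sup_right (hPmem _)))
    have hsymG : ∀ y ∈ (A ⊔ P : Submodule ℝ L), ‖y - ξ₀‖ ≤ (N:ℝ) * δ * B → ∀ i j,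
        fderiv ℝ (G i) y (G j y) = fderiv ℝ (G j) y (G i y) := by
      intro y hyK hyb i j
      have hy1 : ‖y - ξ₀‖ < 1 := lt_of_le_of_lt (hyb.trans hδB) one_half_lt_one
      rw [hDGF i y hy1, hDGF j y hy1, hGF i y hy1.le, hGF j y hy1.le]
      exact aks_sym br P A M πP πA πM hanti hjac hPmem hAmem hMmem hsum hPid hPA hPM
        hMP hMA hAsub hKsub hBsub hAPbr hAMbr V hV hVad hcomm hA0 i j y hyK
    obtain ⟨ξf, hC1, hmemdist, hinit, hpde⟩ := aks_exists G hGc ξ₀ hNpos hG1 B Λ hB hΛ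
      hGB hDGB hUC (A ⊔ P) πK hπK hGK hξ₀ δ hδ hδΛ hsymG
    refine ⟨Metric.ball 0 δ, ξf, Metric.isOpen_ball, Metric.mem_ball_self hδ, hC1,
      fun x hx => (hmemdist x hx).1, hinit, ?_⟩
    intro x hx i
    rw [hpde x hx i]
    exact hGF i (ξf x) (((hmemdist x hx).2.trans hδB).trans (by norm_num))
  · -- UNIQUENESS
    intro ξ₀ hξ₀ U₁ ξ₁ U₂ ξ₂ hsol₁ hsol₂
    set b : ContDiffBump ξ₀ := ⟨1, 2, one_pos, one_lt_two⟩ with hb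
    set G : Fin N → L → L := fun i y => b y • br y (πP (V i y)) with hG
    have hG1 : ∀ i, ContDiff ℝ 1 (G i) := fun i =>
      (b.contDiff (n := 1)).smul (aks_contDiff_F br πP V hV i)
    have hGc : ∀ i, Continuous (G i) := fun i => (hG1 i).continuous
    have hGsupp : ∀ i, HasCompactSupport (G i) := fun i => b.hasCompactSupport.smul_right
    have hGF : ∀ i, ∀ y : L, ‖y - ξ₀‖ ≤ 1 → G i y = br y (πP (V i y)) := by
      intro i y hy
      have h1 : b y = 1 := b.one_of_mem_closedBall
        (by rwa [Metric.mem_closedBall, dist_eq_norm])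
      show b y • br y (πP (V i y)) = br y (πP (V i y))
      rw [h1, one_smul]
    have hΛex : ∀ i, ∃ C, 0 ≤ C ∧ ∀ y, ‖fderiv ℝ (G i) y‖ ≤ C := fun i =>
      aks_bound ((hG1 i).continuous_fderiv one_ne_zero) ((hGsupp i).fderiv (𝕜 := ℝ))
    choose Λ0 hΛ00 hΛ0 using hΛex
    set Λ : ℝ := ∑ i, Λ0 i with hΛdef
    have hΛ : 0 ≤ Λ := Finset.sum_nonneg fun i _ => hΛ00 i
    have hDGB : ∀ i y, ‖fderiv ℝ (G i) y‖ ≤ Λ := fun i y =>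
      (hΛ0 i y).trans (Finset.single_le_sum (fun j _ => hΛ00 j) (Finset.mem_univ i))
    have hLip : ∀ i, LipschitzWith Λ.toNNReal (G i) := fun i =>
      aks_lipschitzWith (hG1 i) hΛ (hDGB i)
    set δ : ℝ := (2*(N:ℝ)*(Λ+1))⁻¹ with hδdef
    have hδ : 0 < δ := by positivity
    have hδΛ : (N:ℝ) * δ * Λ ≤ 1/2 := by
      have h3 : (N:ℝ) * δ * Λ = ((N:ℝ)*Λ)/(2*(N:ℝ)*(Λ+1)) := by rw [hδdef]; ring
      rw [h3, div_le_iff₀ (by positivity)]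
      nlinarith [hNR, hΛ]
    -- small balls on which solutions stay near ξ₀
    have hrad : ∀ (U' : Set (Fin N → ℝ)) (ξ' : (Fin N → ℝ) → L),
        IsLaxSol br πP (A ⊔ P) V ξ₀ U' ξ' →
        ∃ r > 0, Metric.ball (0 : Fin N → ℝ) r ⊆ U'
          ∧ ∀ y ∈ Metric.ball (0 : Fin N → ℝ) r, ‖ξ' y - ξ₀‖ < 1 := by
      intro U' ξ' hsol
      obtain ⟨hUo, h0U, hC1, _, hini, _⟩ := hsol
      have hcont : ContinuousAt ξ' 0 :=
        (hC1.continuousOn.continuousAt (hUo.mem_nhds h0U))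
      have hpre : {y | ξ' y ∈ Metric.ball ξ₀ 1} ∈ nhds (0 : Fin N → ℝ) := by
        refine hcont.preimage_mem_nhds ?_
        rw [hini]
        exact Metric.ball_mem_nhds _ one_pos
      have hint : U' ∩ {y | ξ' y ∈ Metric.ball ξ₀ 1} ∈ nhds (0 : Fin N → ℝ) :=
        Filter.inter_mem (hUo.mem_nhds h0U) hpre
      rw [Metric.mem_nhds_iff] at hint
      obtain ⟨r, hr, hsub⟩ := hint
      refine ⟨r, hr, fun y hy => (hsub hy).1, fun y hy => ?_⟩
      have := (hsub hy).2
      rwa [Set.mem_setOf_eq, Metric.mem_ball, dist_eq_norm] at this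
    obtain ⟨r₁, hr₁, hsub₁, hnear₁⟩ := hrad U₁ ξ₁ hsol₁
    obtain ⟨r₂, hr₂, hsub₂, hnear₂⟩ := hrad U₂ ξ₂ hsol₂
    set r : ℝ := min r₁ r₂ with hrdef
    have hr : 0 < r := lt_min hr₁ hr₂
    obtain ⟨hU1o, h01, hC11, _, hini1, hpde1⟩ := hsol₁
    obtain ⟨hU2o, h02, hC12, _, hini2, hpde2⟩ := hsol₂
    have hball1 : Metric.ball (0 : Fin N → ℝ) r ⊆ U₁ :=
      (Metric.ball_subset_ball (min_le_left _ _)).trans hsub₁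
    have hball2 : Metric.ball (0 : Fin N → ℝ) r ⊆ U₂ :=
      (Metric.ball_subset_ball (min_le_right _ _)).trans hsub₂
    have hd1 : ∀ x ∈ Metric.ball (0 : Fin N → ℝ) r, DifferentiableAt ℝ ξ₁ x := fun x hx =>
      ((hC11.differentiableOn one_ne_zero) x (hball1 hx)).differentiableAt
        (hU1o.mem_nhds (hball1 hx))
    have hd2 : ∀ x ∈ Metric.ball (0 : Fin N → ℝ) r, DifferentiableAt ℝ ξ₂ x := fun x hx =>
      ((hC12.differentiableOn one_ne_zero) x (hball2 hx)).differentiableAt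
        (hU2o.mem_nhds (hball2 hx))
    have hp1 : ∀ x ∈ Metric.ball (0 : Fin N → ℝ) r, ∀ i,
        fderiv ℝ ξ₁ x (Pi.single i 1) = G i (ξ₁ x) := by
      intro x hx i
      rw [hpde1 x (hball1 hx) i,
        hGF i (ξ₁ x) (hnear₁ x (Metric.ball_subset_ball (min_le_left _ _) hx)).le]
    have hp2 : ∀ x ∈ Metric.ball (0 : Fin N → ℝ) r, ∀ i,
        fderiv ℝ ξ₂ x (Pi.single i 1) = G i (ξ₂ x) := by
      intro x hx i
      rw [hpde2 x (hball2 hx) i,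
        hGF i (ξ₂ x) (hnear₂ x (Metric.ball_subset_ball (min_le_right _ _) hx)).le]
    have := aks_unique G hGc ξ₀ Λ hΛ hLip δ hδ hδΛ ξ₁ ξ₂ r hr hini1 hini2 hd1 hd2 hp1 hp2
    exact ⟨Metric.ball 0 (min δ r), Metric.isOpen_ball,
      Metric.mem_ball_self (lt_min hδ hr), this⟩
  · -- MAURER–CARTAN
    intro ξ₀ hξ₀ U ξ hsol x hxU i j
    obtain ⟨hUopen, h0U, hC1, hmem, hinit, hpde⟩ := hsol
    have hdiff : DifferentiableAt ℝ ξ x :=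
      ((hC1.differentiableOn one_ne_zero) x hxU).differentiableAt (hUopen.mem_nhds hxU)
    exact aks_mc br P A M πP πA πM hanti hPmem hAmem hMmem hsum hPid hPA hPM hMP hMA
      hAsub hKsub hBsub hAPbr hAMbr V hV hVad hcomm hA0 ξ x hdiff (hmem x hxU) i j
      (hpde x hxU i) (hpde x hxU j)
end

section
/- Let d ≥ 1 and N ≥ 1 be integers, let Q be a square matrix with Q² = I, let ξ = Σ_{j=−d}^{d} λ^j ξ_j be a Laurent polynomial with matrix coefficients such that ξ_d = Qξ_{−d}Q, and let η₀ be an arbitrary matrix. Set B = λ⁻¹·ξ_{−d}^N + η₀ + λ·Qξ_{−d}^N Q. Then the commutator [ξ, B] = ξB − Bξ has vanishing coefficients in every degree j with |j| > d. -/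
private lemma lp_sub_app {p : ℕ} (f g : LaurentPolynomial (Matrix (Fin p) (Fin p) ℝ)) (j : ℤ) :
    (f - g).coeff j = f.coeff j - g.coeff j := rfl

private lemma lp_add_app {p : ℕ} (f g : LaurentPolynomial (Matrix (Fin p) (Fin p) ℝ)) (j : ℤ) :
    (f + g).coeff j = f.coeff j + g.coeff j := rfl

/-- Tangency of the Lax vector field: if `ξ = Σ_{|j|≤d} λ^j ξ_j` with `ξ_d = Qξ_{−d}Q`
(`Q² = I`), and `B = λ⁻¹ξ_{−d}^N + η₀ + λ·Qξ_{−d}^N Q`, then `[ξ, B]` has vanishing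
coefficients in all degrees `|j| > d`. -/
theorem stmt_14 {p : ℕ} (d N : ℕ) (hd : 1 ≤ d) (hN : 1 ≤ N)
    (Q : Matrix (Fin p) (Fin p) ℝ) (hQ : Q * Q = 1)
    (ξ : LaurentPolynomial (Matrix (Fin p) (Fin p) ℝ))
    (hsupp : ∀ j : ℤ, (d : ℤ) < |j| → ξ.coeff j = 0)
    (hτ : ξ.coeff (d : ℤ) = Q * ξ.coeff (-(d : ℤ)) * Q)
    (η₀ : Matrix (Fin p) (Fin p) ℝ) :
    let B : LaurentPolynomial (Matrix (Fin p) (Fin p) ℝ) :=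
      LaurentPolynomial.C ((ξ.coeff (-(d : ℤ))) ^ N) * LaurentPolynomial.T (-1) +
        LaurentPolynomial.C η₀ +
        LaurentPolynomial.C (Q * (ξ.coeff (-(d : ℤ))) ^ N * Q) * LaurentPolynomial.T 1
    ∀ j : ℤ, (d : ℤ) < |j| → (ξ * B - B * ξ).coeff j = 0 := by
  have hsingle : ∀ (n : ℤ) (r : Matrix (Fin p) (Fin p) ℝ),
      LaurentPolynomial.C r * LaurentPolynomial.T n = AddMonoidAlgebra.single n r :=
    fun n r => (LaurentPolynomial.single_eq_C_mul_T r n).symm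
  intro B j hj
  set c := ξ.coeff (-(d : ℤ)) with hc
  have hC : (LaurentPolynomial.C η₀ : LaurentPolynomial (Matrix (Fin p) (Fin p) ℝ))
      = AddMonoidAlgebra.single 0 η₀ := by
    rw [← hsingle 0 η₀, LaurentPolynomial.T_zero, mul_one]
  have hB : B = AddMonoidAlgebra.single (-1 : ℤ) (c ^ N) + AddMonoidAlgebra.single 0 η₀ +
      AddMonoidAlgebra.single 1 (Q * c ^ N * Q) := by
    simp only [B, hsingle, hC, ← hc]
  rw [hB]
  simp only [mul_add, add_mul, lp_sub_app, lp_add_app,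
    AddMonoidAlgebra.coeff_mul_single_apply, AddMonoidAlgebra.coeff_single_mul_apply,
    sub_neg_eq_add, neg_neg, sub_zero, zero_add, neg_add_eq_sub, ← sub_eq_add_neg]
  -- now everything is in terms of ξ.coeff (j+1), ξ j, ξ.coeff (j-1) (maybe 1+j)
  have hj0 : ξ.coeff j = 0 := hsupp j hj
  rcases le_or_gt 0 j with h0 | h0
  · -- j > d
    have hpos : (d : ℤ) < j := by rwa [abs_of_nonneg h0] at hj
    have h1 : ξ.coeff (j + 1) = 0 := hsupp _ (by rw [abs_of_pos (by omega)]; omega)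
    rcases eq_or_ne j ((d : ℤ) + 1) with rfl | hne
    · have h2 : ξ.coeff ((d : ℤ) + 1 - 1) = ξ.coeff (d : ℤ) := by norm_num
      rw [h1, h2, hj0, hτ]
      have : Q * c * Q * (Q * c ^ N * Q) = Q * c ^ N * Q * (Q * c * Q) := by
        calc Q * c * Q * (Q * c ^ N * Q) = Q * (c * (Q * Q) * c ^ N) * Q := by
              simp only [mul_assoc]
          _ = Q * (c ^ N * (Q * Q) * c) * Q := by
              rw [hQ]; simp only [mul_one, ← pow_succ, ← pow_succ']
          _ = Q * c ^ N * Q * (Q * c * Q) := by simp only [mul_assoc]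
      simp only [show (1:ℤ)+((d:ℤ)+1) = (d:ℤ)+1+1 from by ring,
        show (-1:ℤ)+((d:ℤ)+1) = (d:ℤ) from by ring,
        show ((d:ℤ)+1-1) = (d:ℤ) from by ring, h1, hj0, hτ, this]
      simp
    · have h3 : ξ.coeff (j - 1) = 0 := hsupp _ (by rw [abs_of_pos (by omega)]; omega)
      simp only [show (1:ℤ)+j = j+1 from by ring, show (-1:ℤ)+j = j-1 from by ring,
        h1, h3, hj0]
      simp
  · -- j < -d
    have hneg : j < -(d : ℤ) := by rw [abs_of_neg h0] at hj; omega
    have h3 : ξ.coeff (j - 1) = 0 := hsupp _ (by rw [abs_of_neg (by omega)]; omega)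
    rcases eq_or_ne j (-(d : ℤ) - 1) with rfl | hne
    · simp only [show (1:ℤ)+(-(d:ℤ)-1) = -(d:ℤ) from by ring,
        show (-1:ℤ)+(-(d:ℤ)-1) = -(d:ℤ)-1-1 from by ring,
        show (-(d:ℤ)-1+1) = -(d:ℤ) from by ring, h3, hj0, ← hc,
        ← pow_succ, ← pow_succ']
      simp
    · have h1 : ξ.coeff (j + 1) = 0 := hsupp _ (by rw [abs_of_neg (by omega)]; omega)
      simp only [show (1:ℤ)+j = j+1 from by ring, show (-1:ℤ)+j = j-1 from by ring,
        h1, h3, hj0]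
      simp
end

section
/- Let A ∈ Mat_{n+1}(ℂ) be a matrix whose only possibly nonzero blocks are the (0,mid), (mid,0), (mid,bot) and (bot,mid) blocks. Then for all integers i, j ≥ 1, the (bot,bot) block of the commutator [A^{2i−1}, Q·A^{2j−1}·Q] is zero. -/
open Matrix

/-- sign function for `P`. -/
def psgn {m k : ℕ} : Idx m k → ℂ
  | Sum.inl _ => -1
  | Sum.inr (Sum.inl _) => 1
  | Sum.inr (Sum.inr _) => -1

/-- sign function for `Q`. -/
def qsgn {m k : ℕ} : Idx m k → ℂ
  | Sum.inl _ => 1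
  | Sum.inr (Sum.inl _) => 1
  | Sum.inr (Sum.inr _) => -1

lemma Qmat_eq_diagonal (m k : ℕ) : Qmat ℂ m k = Matrix.diagonal qsgn := by
  ext x y
  rcases x with x | x | x <;> rcases y with y | y | y <;>
    simp [Qmat, blk3, qsgn, Matrix.diagonal, Matrix.one_apply, Matrix.neg_apply,
      Fin.ext_iff, eq_comm] <;>
    aesop

/-- For `A ∈ (g^{−P})^ℂ` (only the `(0,mid)`, `(mid,0)`, `(mid,bot)`, `(bot,mid)` blocks
possibly nonzero), the `(bot,bot)` block of `[A^{2i−1}, Q·A^{2j−1}·Q]` vanishes. -/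
theorem stmt_15 {m k : ℕ} (hm : 1 ≤ m) (hk : 1 ≤ k)
    (A : Matrix (Idx m k) (Idx m k) ℂ)
    (h00 : ∀ a b, A (Sum.inl a) (Sum.inl b) = 0)
    (h02 : ∀ a b, A (Sum.inl a) (Sum.inr (Sum.inr b)) = 0)
    (h20 : ∀ a b, A (Sum.inr (Sum.inr a)) (Sum.inl b) = 0)
    (h11 : ∀ a b, A (Sum.inr (Sum.inl a)) (Sum.inr (Sum.inl b)) = 0)
    (h22 : ∀ a b, A (Sum.inr (Sum.inr a)) (Sum.inr (Sum.inr b)) = 0)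
    (i j : ℕ) (hi : 1 ≤ i) (hj : 1 ≤ j) :
    ∀ a b,
      (A ^ (2 * i - 1) * (Qmat ℂ m k * A ^ (2 * j - 1) * Qmat ℂ m k)
        - (Qmat ℂ m k * A ^ (2 * j - 1) * Qmat ℂ m k) * A ^ (2 * i - 1))
        (Sum.inr (Sum.inr a)) (Sum.inr (Sum.inr b)) = 0 := by
  -- `A` anticommutes with `diagonal psgn`
  have hPA : Matrix.diagonal psgn * A = -(A * Matrix.diagonal psgn) := by
    ext x y
    rw [Matrix.diagonal_mul, Matrix.neg_apply, Matrix.mul_diagonal]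
    rcases x with x | x | x <;> rcases y with y | y | y <;>
      simp [psgn, h00, h02, h20, h11, h22] <;> ring
  have key : ∀ n : ℕ, Matrix.diagonal psgn * A ^ n
      = (-1 : ℂ) ^ n • (A ^ n * Matrix.diagonal psgn) := by
    intro n
    induction n with
    | zero => simp
    | succ n ih =>
      rw [pow_succ, ← mul_assoc, ih, smul_mul_assoc, mul_assoc, hPA, pow_succ]
      simp [mul_assoc]
  -- entrywise zero consequences for odd powers
  have zeros : ∀ r : ℕ, Odd r →
      (∀ a b, (A ^ r) (Sum.inr (Sum.inr a)) (Sum.inl b) = 0) ∧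
      (∀ a b, (A ^ r) (Sum.inr (Sum.inr a)) (Sum.inr (Sum.inr b)) = 0) := by
    intro r hr
    have hkey := key r
    rw [hr.neg_one_pow, neg_smul, one_smul] at hkey
    constructor
    · intro a b
      have := congrFun (congrFun hkey (Sum.inr (Sum.inr a))) (Sum.inl b)
      rw [Matrix.diagonal_mul, Matrix.neg_apply, Matrix.mul_diagonal] at this
      simp only [psgn] at this
      have h2 : (2 : ℂ) * (A ^ r) (Sum.inr (Sum.inr a)) (Sum.inl b) = 0 := by
        linear_combination -this
      exact (mul_eq_zero.mp h2).resolve_left two_ne_zero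
    · intro a b
      have := congrFun (congrFun hkey (Sum.inr (Sum.inr a))) (Sum.inr (Sum.inr b))
      rw [Matrix.diagonal_mul, Matrix.neg_apply, Matrix.mul_diagonal] at this
      simp only [psgn] at this
      have h2 : (2 : ℂ) * (A ^ r) (Sum.inr (Sum.inr a)) (Sum.inr (Sum.inr b)) = 0 := by
        linear_combination -this
      exact (mul_eq_zero.mp h2).resolve_left two_ne_zero
  obtain ⟨hB20, hBbb⟩ := zeros (2 * i - 1) ⟨i - 1, by omega⟩
  obtain ⟨hC20, hCbb⟩ := zeros (2 * j - 1) ⟨j - 1, by omega⟩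
  set B := A ^ (2 * i - 1) with hB
  set C := A ^ (2 * j - 1) with hC
  have hcomm : B * C = C * B := by
    rw [hB, hC, ← pow_add, ← pow_add, Nat.add_comm]
  intro a b
  have hc : (B * C) (Sum.inr (Sum.inr a)) (Sum.inr (Sum.inr b))
      = (C * B) (Sum.inr (Sum.inr a)) (Sum.inr (Sum.inr b)) := by rw [hcomm]
  rw [Matrix.mul_apply, Matrix.mul_apply, Fintype.sum_sum_type, Fintype.sum_sum_type,
    Fintype.sum_sum_type, Fintype.sum_sum_type] at hc
  simp only [hB20, hBbb, hC20, hCbb, zero_mul, mul_zero, Finset.sum_const_zero,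
    add_zero, zero_add] at hc
  rw [Matrix.sub_apply, Matrix.mul_apply, Matrix.mul_apply, Qmat_eq_diagonal]
  simp only [Matrix.mul_diagonal, Matrix.diagonal_mul]
  rw [Fintype.sum_sum_type, Fintype.sum_sum_type, Fintype.sum_sum_type, Fintype.sum_sum_type]
  simp only [hB20, hBbb, hC20, hCbb, qsgn, zero_mul, mul_zero, Finset.sum_const_zero,
    add_zero, zero_add, mul_one, one_mul, mul_neg, neg_mul, neg_neg, Finset.sum_neg_distrib]
  linear_combination -hc
end
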